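/- arXiv:math/0412044 — 10 statements merged into one kernel-verified Lean document; each statement's English description precedes it below -/
import Mathlib

section
/- Let g be a formal power series in n variables with support ND(g) ⊆ ℕ^n, let E(g) be a finite subset of ND(g) with ND(g) + ℕ^n = E(g) + ℕ^n, and let New(g) = conv(E(g)) + ℝ_{≥0}^n be its Newton polyhedron. If u ∈ ℝ_{≤0}^n has support supp(u) = {i | u_i ≠ 0}, and E_u(g) denotes the elements of E(g) maximal for the scalar product with u, then face_u(New(g)) = conv(E_u(g)) + Σ_{i ∉ supp(u)} ℝ_{≥0}·e_i, where e_i are the standard basis vectors. -/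
open scoped Pointwise

noncomputable section

/-- Scalar product on `ℝ^n`. -/
def udot {n : ℕ} (u x : Fin n → ℝ) : ℝ := ∑ i, u i * x i

lemma udot_isLinear {n : ℕ} (u : Fin n → ℝ) : IsLinearMap ℝ (udot u) := by
  constructor
  · intro x y; simp [udot, mul_add, Finset.sum_add_distrib]
  · intro r x; simp [udot, Finset.mul_sum, mul_left_comm]

lemma udot_le_of_mem_convexHull {n : ℕ} (u : Fin n → ℝ) (T : Set (Fin n → ℝ)) (M : ℝ)
    (hT : ∀ y ∈ T, udot u y ≤ M) {x : Fin n → ℝ} (hx : x ∈ convexHull ℝ T) :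
    udot u x ≤ M :=
  convexHull_min hT (convex_halfSpace_le (udot_isLinear u) M) hx

lemma udot_eq_of_mem_convexHull {n : ℕ} (u : Fin n → ℝ) (T : Set (Fin n → ℝ)) (M : ℝ)
    (hT : ∀ y ∈ T, udot u y = M) {x : Fin n → ℝ} (hx : x ∈ convexHull ℝ T) :
    udot u x = M :=
  convexHull_min hT (convex_hyperplane (udot_isLinear u) M) hx

lemma mem_convexHull_max {n : ℕ} (u : Fin n → ℝ) (T : Set (Fin n → ℝ)) (M : ℝ)
    (hT : ∀ y ∈ T, udot u y ≤ M) {x : Fin n → ℝ} (hx : x ∈ convexHull ℝ T)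
    (hxM : udot u x = M) :
    x ∈ convexHull ℝ {y | y ∈ T ∧ udot u y = M} := by
  rw [convexHull_eq] at hx
  obtain ⟨ι, t, w, z, hw, hw1, hz, hcm⟩ := hx
  have hsum : x = ∑ j ∈ t, w j • z j := by
    rw [← hcm, Finset.centerMass_eq_of_sum_1 _ _ hw1]
  have hval : ∑ j ∈ t, w j * udot u (z j) = M := by
    have h1 : udot u x = ∑ j ∈ t, w j * udot u (z j) := by
      rw [hsum]
      simp only [udot, Finset.sum_apply, Pi.smul_apply, smul_eq_mul, Finset.mul_sum]
      rw [Finset.sum_comm]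
      refine Finset.sum_congr rfl fun j _ => Finset.sum_congr rfl fun i _ => by ring
    rw [← h1, hxM]
  have hzero : ∀ j ∈ t, w j * (M - udot u (z j)) = 0 := by
    rw [← Finset.sum_eq_zero_iff_of_nonneg]
    · have : ∑ j ∈ t, w j * (M - udot u (z j)) = (∑ j ∈ t, w j) * M - ∑ j ∈ t, w j * udot u (z j) := by
        rw [Finset.sum_mul]
        rw [← Finset.sum_sub_distrib]
        congr 1; ext j; ring
      rw [this, hw1, hval]; ring
    · intro j hj
      exact mul_nonneg (hw j hj) (sub_nonneg.2 (hT _ (hz j hj)))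
  rw [← hcm, ← Finset.centerMass_filter_ne_zero]
  apply Finset.centerMass_mem_convexHull
  · intro j hj; exact hw j (Finset.mem_filter.1 hj).1
  · rw [Finset.sum_filter_ne_zero, hw1]; norm_num
  · intro j hj
    obtain ⟨hjt, hwj⟩ := Finset.mem_filter.1 hj
    refine ⟨hz j hjt, ?_⟩
    have := hzero j hjt
    rcases mul_eq_zero.1 this with h | h
    · exact absurd h hwj
    · linarith [sub_eq_zero.1 h]

/-- Embedding of integer exponent vectors into `ℝ^n`. -/
def embN {n : ℕ} (a : Fin n → ℕ) : Fin n → ℝ := fun i => (a i : ℝ)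

/-- The face of a set `Q` in direction `u`: points of `Q` maximizing `x ↦ u·x`. -/
def face {n : ℕ} (u : Fin n → ℝ) (Q : Set (Fin n → ℝ)) : Set (Fin n → ℝ) :=
  {x | x ∈ Q ∧ ∀ y ∈ Q, udot u y ≤ udot u x}

/-- Let `S ⊆ ℕ^n` be the support of a power series `g`, `E ⊆ S` a finite set with
`S + ℕ^n = E + ℕ^n`, and `New(g) = conv(E) + ℝ_{≥0}^n` its Newton polyhedron.  For
`u ∈ ℝ_{≤0}^n`, the face of `New(g)` in direction `u` is
`conv(E_u) + Σ_{i ∉ supp(u)} ℝ_{≥0}·e_i`, where `E_u` is the set of elements of `E`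
maximal for the scalar product with `u`. -/
theorem face_newton_polyhedron {n : ℕ} (S : Set (Fin n → ℕ)) (E : Finset (Fin n → ℕ))
    (hES : (E : Set (Fin n → ℕ)) ⊆ S)
    (hgen : ∀ a ∈ S, ∃ e ∈ E, ∃ b : Fin n → ℕ, a = e + b)
    (u : Fin n → ℝ) (hu : ∀ i, u i ≤ 0) :
    face u (convexHull ℝ (embN '' (E : Set (Fin n → ℕ))) + {x : Fin n → ℝ | ∀ i, 0 ≤ x i}) =
      convexHull ℝ (embN ''
          {e : Fin n → ℕ | e ∈ E ∧ ∀ e' ∈ E, udot u (embN e') ≤ udot u (embN e)}) +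
        {x : Fin n → ℝ | (∀ i, 0 ≤ x i) ∧ ∀ i, u i ≠ 0 → x i = 0} := by
  set T : Set (Fin n → ℝ) := embN '' (E : Set (Fin n → ℕ)) with hTdef
  set Eu : Set (Fin n → ℕ) :=
    {e : Fin n → ℕ | e ∈ E ∧ ∀ e' ∈ E, udot u (embN e') ≤ udot u (embN e)} with hEudef
  ext x
  constructor
  · rintro ⟨hxQ, hmax⟩
    rw [Set.mem_add] at hxQ
    obtain ⟨c, hc, p, hp, rfl⟩ := hxQ
    have hTne : T.Nonempty := convexHull_nonempty_iff.1 ⟨c, hc⟩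
    obtain ⟨y₁, e₁, he₁, rfl⟩ := hTne
    obtain ⟨e₀, he₀E, he₀max⟩ :=
      E.exists_max_image (fun e => udot u (embN e)) ⟨e₁, he₁⟩
    set M := udot u (embN e₀) with hMdef
    have hTle : ∀ y ∈ T, udot u y ≤ M := by
      rintro y ⟨e, heE, rfl⟩
      exact he₀max e heE
    have hcle : udot u c ≤ M := udot_le_of_mem_convexHull u T M hTle hc
    have hple : udot u p ≤ 0 :=
      Finset.sum_nonpos fun i _ => mul_nonpos_iff.2 (Or.inr ⟨hu i, hp i⟩)
    have hMle : M ≤ udot u (c + p) := by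
      have h0 : embN e₀ + 0 ∈
          convexHull ℝ T + {x : Fin n → ℝ | ∀ i, 0 ≤ x i} :=
        Set.add_mem_add (subset_convexHull ℝ T ⟨e₀, he₀E, rfl⟩) (fun i => le_rfl)
      have := hmax (embN e₀ + 0) h0
      simpa using this
    have hadd : udot u (c + p) = udot u c + udot u p := (udot_isLinear u).map_add c p
    have hcM : udot u c = M := le_antisymm hcle (by linarith)
    have hpM : udot u p = 0 := by linarith
    have hterm : ∀ i ∈ (Finset.univ : Finset (Fin n)), u i * p i = 0 :=
      (Finset.sum_eq_zero_iff_of_nonpos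
        (fun i _ => mul_nonpos_iff.2 (Or.inr ⟨hu i, hp i⟩))).1 hpM
    have hcmem := mem_convexHull_max u T M hTle hc hcM
    have hsub : {y | y ∈ T ∧ udot u y = M} ⊆ embN '' Eu := by
      rintro y ⟨⟨e, heE, rfl⟩, hyM⟩
      refine ⟨e, ⟨heE, fun e' he' => ?_⟩, rfl⟩
      rw [hyM]
      exact he₀max e' he'
    refine Set.add_mem_add (convexHull_mono hsub hcmem) ⟨hp, fun i hui => ?_⟩
    exact (mul_eq_zero.1 (hterm i (Finset.mem_univ i))).resolve_left hui
  · intro hx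
    rw [Set.mem_add] at hx
    obtain ⟨c, hc, p, ⟨hp0, hpu⟩, rfl⟩ := hx
    have hne : (embN '' Eu).Nonempty := convexHull_nonempty_iff.1 ⟨c, hc⟩
    obtain ⟨y₁, e₀, ⟨he₀E, he₀max⟩, rfl⟩ := hne
    set M := udot u (embN e₀) with hMdef
    have hval : ∀ y ∈ embN '' Eu, udot u y = M := by
      rintro y ⟨e, ⟨heE, hemax⟩, rfl⟩
      exact le_antisymm (he₀max e heE) (hemax e₀ he₀E)
    have hcM : udot u c = M := udot_eq_of_mem_convexHull u _ M hval hc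
    have hpM : udot u p = 0 := by
      refine Finset.sum_eq_zero fun i _ => ?_
      by_cases h : u i = 0
      · simp [h]
      · simp [hpu i h]
    have hEuE : embN '' Eu ⊆ T := Set.image_mono fun e he => he.1
    constructor
    · exact Set.add_mem_add (convexHull_mono hEuE hc) hp0
    · intro y hy
      rw [Set.mem_add] at hy
      obtain ⟨c', hc', p', hp', rfl⟩ := hy
      have hTle : ∀ y ∈ T, udot u y ≤ M := by
        rintro y ⟨e, heE, rfl⟩
        exact he₀max e heE
      have h1 : udot u c' ≤ M := udot_le_of_mem_convexHull u T M hTle hc'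
      have h2 : udot u p' ≤ 0 :=
        Finset.sum_nonpos fun i _ => mul_nonpos_iff.2 (Or.inr ⟨hu i, hp' i⟩)
      have h3 : udot u (c' + p') = udot u c' + udot u p' := (udot_isLinear u).map_add c' p'
      have h4 : udot u (c + p) = udot u c + udot u p := (udot_isLinear u).map_add c p
      rw [h3, h4, hcM, hpM]
      linarith
end
end

section
/- Let g be a formal power series with Newton polyhedron New(g) = conv(E(g)) + ℝ_{≥0}^n, where E(g) ⊆ ℕ^n is finite. For u, u' ∈ ℝ_{≤0}^n, the following are equivalent: (1) supp(u) = supp(u') and the initial-exponent sets {α ∈ ND(g) | u·α = ord^u(g)} and {α ∈ ND(g) | u'·α = ord^{u'}(g)} coincide; (2) face_u(New(g)) = face_{u'}(New(g)). -/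
open scoped Pointwise

noncomputable section

/-- Scalar product of a real weight vector with an integer exponent vector. -/
def udotN {n : ℕ} (u : Fin n → ℝ) (a : Fin n → ℕ) : ℝ := ∑ i, u i * (a i : ℝ)

namespace NPAux
variable {n : ℕ}

lemma udot_lin (u : Fin n → ℝ) : IsLinearMap ℝ (udot u) := by
  constructor
  · intro x y; simp [udot, mul_add, Finset.sum_add_distrib]
  · intro c x; simp [udot, Finset.mul_sum, mul_left_comm]

lemma udot_add (u x y : Fin n → ℝ) : udot u (x + y) = udot u x + udot u y :=
  (udot_lin u).map_add x y

lemma udot_embN (u : Fin n → ℝ) (a : Fin n → ℕ) : udot u (embN a) = udotN u a := rfl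

lemma embN_add (a b : Fin n → ℕ) : embN (a + b) = embN a + embN b := by
  funext i; simp [embN]

lemma udot_nonpos {u x : Fin n → ℝ} (hu : ∀ i, u i ≤ 0) (hx : ∀ i, 0 ≤ x i) :
    udot u x ≤ 0 :=
  Finset.sum_nonpos fun i _ => mul_nonpos_of_nonpos_of_nonneg (hu i) (hx i)

lemma udot_sum {ι : Type*} (u : Fin n → ℝ) (s : Finset ι) (f : ι → Fin n → ℝ) :
    udot u (∑ i ∈ s, f i) = ∑ i ∈ s, udot u (f i) :=
  map_sum (IsLinearMap.mk' (udot u) (udot_lin u)) f s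

lemma udot_smul (u : Fin n → ℝ) (c : ℝ) (x : Fin n → ℝ) :
    udot u (c • x) = c * udot u x := (udot_lin u).map_smul c x

lemma udot_single (u : Fin n → ℝ) (i : Fin n) : udot u (Pi.single i 1) = u i := by
  simp [udot, Pi.single_apply, mul_ite, Finset.sum_ite_eq']

def Qset (E : Finset (Fin n → ℕ)) : Set (Fin n → ℝ) :=
  convexHull ℝ (embN '' (E : Set (Fin n → ℕ))) + {x : Fin n → ℝ | ∀ i, 0 ≤ x i}

lemma embN_mem_Q {E : Finset (Fin n → ℕ)} {e : Fin n → ℕ} (he : e ∈ E)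
    (b : Fin n → ℕ) : embN (e + b) ∈ Qset E := by
  rw [embN_add]
  exact Set.add_mem_add (subset_convexHull ℝ _ ⟨e, he, rfl⟩)
    (fun i => Nat.cast_nonneg (b i))

lemma hull_bound {E : Finset (Fin n → ℕ)} {u : Fin n → ℝ} {M : ℝ}
    (hE : ∀ e ∈ E, udotN u e ≤ M) {c : Fin n → ℝ}
    (hc : c ∈ convexHull ℝ (embN '' (E : Set (Fin n → ℕ)))) : udot u c ≤ M := by
  refine convexHull_min ?_ (convex_halfSpace_le (udot_lin u) M) hc
  rintro y ⟨e, he, rfl⟩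
  exact hE e he

lemma Q_bound {E : Finset (Fin n → ℕ)} {u : Fin n → ℝ} (hu : ∀ i, u i ≤ 0) {M : ℝ}
    (hE : ∀ e ∈ E, udotN u e ≤ M) {y : Fin n → ℝ} (hy : y ∈ Qset E) :
    udot u y ≤ M := by
  obtain ⟨c, hc, r, hr, rfl⟩ := hy
  rw [udot_add]
  have h1 := hull_bound hE hc
  have h2 := udot_nonpos hu hr
  linarith

lemma mem_face_of_max {ND : Set (Fin n → ℕ)} {E : Finset (Fin n → ℕ)}
    (hES : (E : Set (Fin n → ℕ)) ⊆ ND)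
    (hgen : ∀ a ∈ ND, ∃ e ∈ E, ∃ b : Fin n → ℕ, a = e + b)
    {u : Fin n → ℝ} (hu : ∀ i, u i ≤ 0) {α : Fin n → ℕ} (hα : α ∈ ND)
    (hmax : ∀ β ∈ ND, udotN u β ≤ udotN u α) :
    embN α ∈ face u (Qset E) := by
  obtain ⟨e, he, b, rfl⟩ := hgen _ hα
  refine ⟨embN_mem_Q he b, fun y hy => ?_⟩
  rw [udot_embN]
  exact Q_bound hu (fun e' he' => hmax e' (hES he')) hy

/-- Direction (1) ⇒ (2), one inclusion. -/
lemma face_subset {ND : Set (Fin n → ℕ)} {E : Finset (Fin n → ℕ)}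
    (hES : (E : Set (Fin n → ℕ)) ⊆ ND)
    (hgen : ∀ a ∈ ND, ∃ e ∈ E, ∃ b : Fin n → ℕ, a = e + b)
    {u u' : Fin n → ℝ} (hu : ∀ i, u i ≤ 0) (hu' : ∀ i, u' i ≤ 0)
    (hatt : ∃ α ∈ ND, ∀ β ∈ ND, udotN u β ≤ udotN u α)
    (hatt' : ∃ α ∈ ND, ∀ β ∈ ND, udotN u' β ≤ udotN u' α)
    (hsupp : ∀ i, u' i ≠ 0 → u i ≠ 0)
    (hI : {α : Fin n → ℕ | α ∈ ND ∧ ∀ β ∈ ND, udotN u β ≤ udotN u α} ⊆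
          {α : Fin n → ℕ | α ∈ ND ∧ ∀ β ∈ ND, udotN u' β ≤ udotN u' α}) :
    face u (Qset E) ⊆ face u' (Qset E) := by
  obtain ⟨α, hαND, hαmax⟩ := hatt
  obtain ⟨α', hα'ND, hα'max⟩ := hatt'
  rintro x ⟨hxQ, hxmax⟩
  obtain ⟨c, hc, r, hr, rfl⟩ := hxQ
  set M := udotN u α with hM
  set M' := udotN u' α' with hM'
  -- u·c = M and u·r = 0
  have h1 : udot u c ≤ M := hull_bound (fun e he => hαmax e (hES he)) hc
  have h2 : udot u r ≤ 0 := udot_nonpos hu hr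
  have h3 : M ≤ udot u (c + r) := by
    have hmem := (mem_face_of_max hES hgen hu hαND hαmax).1
    have := hxmax _ hmem
    rwa [udot_embN] at this
  rw [udot_add] at h3
  have hrc : udot u c = M := by linarith
  have hrr : udot u r = 0 := by linarith
  -- u'·r = 0
  have hri : ∀ i, u i ≠ 0 → r i = 0 := by
    intro i hi
    have hterm : ∀ j ∈ Finset.univ, u j * r j = 0 := by
      refine (Finset.sum_eq_zero_iff_of_nonpos ?_).1 hrr
      exact fun j _ => mul_nonpos_of_nonpos_of_nonneg (hu j) (hr j)
    rcases mul_eq_zero.1 (hterm i (Finset.mem_univ i)) with h | h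
    · exact absurd h hi
    · exact h
  have hu'r : udot u' r = 0 := by
    refine Finset.sum_eq_zero fun i _ => ?_
    by_cases h : u' i = 0
    · simp [h]
    · rw [hri i (hsupp i h), mul_zero]
  -- u'·c = M'
  have hu'c : udot u' c = M' := by
    have hc' : c ∈ convexHull ℝ ((E.image embN : Finset (Fin n → ℝ)) : Set (Fin n → ℝ)) := by
      rwa [Finset.coe_image]
    obtain ⟨w, hw0, hw1, hwc⟩ := (Finset.mem_convexHull).1 hc'
    rw [Finset.centerMass_eq_of_sum_1 _ _ hw1] at hwc
    have hudot : ∀ (v : Fin n → ℝ), udot v c = ∑ y ∈ E.image embN, w y * udot v y := by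
      intro v
      rw [← hwc, udot_sum]
      refine Finset.sum_congr rfl fun y _ => ?_
      rw [id, udot_smul]
    have hbd : ∀ y ∈ E.image embN, udot u y ≤ M := by
      intro y hy
      obtain ⟨e, he, rfl⟩ := Finset.mem_image.1 hy
      exact hαmax e (hES he)
    have hsum0 : ∑ y ∈ E.image embN, w y * (M - udot u y) = 0 := by
      have := hudot u
      rw [hrc] at this
      simp only [mul_sub]
      rw [Finset.sum_sub_distrib, ← Finset.sum_mul, hw1, one_mul, ← this]
      ring
    have hterms := (Finset.sum_eq_zero_iff_of_nonneg (fun y hy =>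
      mul_nonneg (hw0 y hy) (by linarith [hbd y hy]))).1 hsum0
    have hval : ∀ y ∈ E.image embN, w y * udot u' y = w y * M' := by
      intro y hy
      by_cases hwy : w y = 0
      · simp [hwy]
      · obtain ⟨e, he, rfl⟩ := Finset.mem_image.1 hy
        have hMe : udotN u e = M := by
          have := hterms _ hy
          rcases mul_eq_zero.1 this with h | h
          · exact absurd h hwy
          · have : udot u (embN e) = M := by linarith
            rwa [udot_embN] at this
        have heI : e ∈ {α : Fin n → ℕ | α ∈ ND ∧ ∀ β ∈ ND, udotN u β ≤ udotN u α} :=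
          ⟨hES he, fun β hβ => hMe ▸ hαmax β hβ⟩
        have heI' := hI heI
        rw [udot_embN]
        congr 1
        exact le_antisymm (hα'max e (hES he)) (heI'.2 α' hα'ND)
    rw [hudot u', Finset.sum_congr rfl hval, ← Finset.sum_mul, hw1, one_mul]
  refine ⟨⟨c, hc, r, hr, rfl⟩, fun y hy => ?_⟩
  rw [udot_add, hu'c, hu'r, add_zero]
  exact Q_bound hu' (fun e he => hα'max e (hES he)) hy

/-- Direction (2) ⇒ (1): supports. -/
lemma supp_imp {ND : Set (Fin n → ℕ)} {E : Finset (Fin n → ℕ)}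
    (hES : (E : Set (Fin n → ℕ)) ⊆ ND)
    (hgen : ∀ a ∈ ND, ∃ e ∈ E, ∃ b : Fin n → ℕ, a = e + b)
    {u u' : Fin n → ℝ} (hu' : ∀ i, u' i ≤ 0)
    (hatt' : ∃ α ∈ ND, ∀ β ∈ ND, udotN u' β ≤ udotN u' α)
    (hface : face u (Qset E) = face u' (Qset E))
    {i : Fin n} (hi : u' i = 0) : u i = 0 := by
  obtain ⟨α', hα'ND, hα'max⟩ := hatt'
  have hp : embN α' ∈ face u' (Qset E) := mem_face_of_max hES hgen hu' hα'ND hα'max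
  obtain ⟨e, he, b, hab⟩ := hgen _ hα'ND
  have hpq : embN α' + Pi.single i 1 ∈ Qset E := by
    rw [hab, embN_add, add_assoc]
    refine Set.add_mem_add (subset_convexHull ℝ _ ⟨e, he, rfl⟩) (fun j => ?_)
    have h1 : (0:ℝ) ≤ embN b j := Nat.cast_nonneg (b j)
    have h2 : (0:ℝ) ≤ (Pi.single i (1:ℝ) : Fin n → ℝ) j := by
      rcases eq_or_ne j i with h | h <;> simp [h, Pi.single_apply]
    exact add_nonneg h1 h2
  have hpq_face : embN α' + Pi.single i 1 ∈ face u' (Qset E) := by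
    refine ⟨hpq, fun y hy => ?_⟩
    rw [udot_add, udot_single, hi, add_zero]
    exact hp.2 y hy
  rw [← hface] at hp hpq_face
  have h1 := hp.2 _ hpq_face.1
  have h2 := hpq_face.2 _ hp.1
  rw [udot_add, udot_single] at h1 h2
  linarith

/-- Direction (2) ⇒ (1): initial sets. -/
lemma I_subset_of_face {ND : Set (Fin n → ℕ)} {E : Finset (Fin n → ℕ)}
    (hES : (E : Set (Fin n → ℕ)) ⊆ ND)
    (hgen : ∀ a ∈ ND, ∃ e ∈ E, ∃ b : Fin n → ℕ, a = e + b)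
    {u u' : Fin n → ℝ} (hu : ∀ i, u i ≤ 0)
    (hface : face u (Qset E) = face u' (Qset E)) :
    {α : Fin n → ℕ | α ∈ ND ∧ ∀ β ∈ ND, udotN u β ≤ udotN u α} ⊆
      {α : Fin n → ℕ | α ∈ ND ∧ ∀ β ∈ ND, udotN u' β ≤ udotN u' α} := by
  rintro α ⟨hαND, hmax⟩
  have h := mem_face_of_max hES hgen hu hαND hmax
  rw [hface] at h
  refine ⟨hαND, fun β hβ => ?_⟩
  obtain ⟨e, he, b, rfl⟩ := hgen _ hβ
  have := h.2 _ (embN_mem_Q he b)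
  rwa [udot_embN, udot_embN] at this

end NPAux

/-- Let `ND ⊆ ℕ^n` be the support of a power series `g`, `E ⊆ ND` finite with
`ND + ℕ^n = E + ℕ^n`, and `New(g) = conv(E) + ℝ_{≥0}^n`.  For `u, u' ∈ ℝ_{≤0}^n`
(whose maxima over `ND` are attained), the following are equivalent:
(1) `supp(u) = supp(u')` and the initial-exponent sets
`{α ∈ ND | u·α maximal}` and `{α ∈ ND | u'·α maximal}` coincide;
(2) `face_u(New(g)) = face_{u'}(New(g))`. -/
theorem initial_exponents_iff_face_eq {n : ℕ} (ND : Set (Fin n → ℕ))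
    (E : Finset (Fin n → ℕ)) (hES : (E : Set (Fin n → ℕ)) ⊆ ND)
    (hgen : ∀ a ∈ ND, ∃ e ∈ E, ∃ b : Fin n → ℕ, a = e + b)
    (u u' : Fin n → ℝ) (hu : ∀ i, u i ≤ 0) (hu' : ∀ i, u' i ≤ 0)
    (hatt : ∃ α ∈ ND, ∀ β ∈ ND, udotN u β ≤ udotN u α)
    (hatt' : ∃ α ∈ ND, ∀ β ∈ ND, udotN u' β ≤ udotN u' α) :
    ((∀ i, u i ≠ 0 ↔ u' i ≠ 0) ∧
      {α : Fin n → ℕ | α ∈ ND ∧ ∀ β ∈ ND, udotN u β ≤ udotN u α} =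
        {α : Fin n → ℕ | α ∈ ND ∧ ∀ β ∈ ND, udotN u' β ≤ udotN u' α}) ↔
    face u (convexHull ℝ (embN '' (E : Set (Fin n → ℕ))) + {x : Fin n → ℝ | ∀ i, 0 ≤ x i}) =
      face u' (convexHull ℝ (embN '' (E : Set (Fin n → ℕ))) +
        {x : Fin n → ℝ | ∀ i, 0 ≤ x i}) := by
  show _ ↔ face u (NPAux.Qset E) = face u' (NPAux.Qset E)
  constructor
  · rintro ⟨hsupp, hI⟩
    exact Set.Subset.antisymm
      (NPAux.face_subset hES hgen hu hu' hatt hatt'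
        (fun i h => (hsupp i).mpr h) hI.subset)
      (NPAux.face_subset hES hgen hu' hu hatt' hatt
        (fun i h => (hsupp i).mp h) hI.symm.subset)
  · intro hface
    refine ⟨fun i => ⟨fun h h' => h (NPAux.supp_imp hES hgen hu' hatt' hface h'),
      fun h h' => h (NPAux.supp_imp hES hgen hu hatt hface.symm h')⟩,
      Set.Subset.antisymm
        (NPAux.I_subset_of_face hES hgen hu hface)
        (NPAux.I_subset_of_face hES hgen hu' hface.symm)⟩
end
end

section
/- Let K be a closed convex cone in ℝ^n that is the union of finitely many pairwise disjoint relatively open convex cones C₁,…,C_r. If K equals the intersection of the closures of two of these cones, closure(C_i) ∩ closure(C_j), and the closure of each C_k contained in K is a face of both closure(C_i) and closure(C_j), then K is itself a common face of closure(C_i) and closure(C_j). -/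
noncomputable section

/-- `F` is a face of the convex set `C`: a convex subset such that whenever a point of the
open segment between two points of `C` lies in `F`, both endpoints lie in `F`. -/
def IsFaceOf {n : ℕ} (F C : Set (Fin n → ℝ)) : Prop :=
  F ⊆ C ∧ Convex ℝ F ∧ ∀ x ∈ C, ∀ y ∈ C, ∀ t : ℝ, 0 < t → t < 1 →
    t • x + (1 - t) • y ∈ F → x ∈ F ∧ y ∈ F

/-- Let `K` be a closed convex cone which is the union of finitely many pairwise disjoint
relatively open convex cones `C k`.  If `K = closure (C i) ∩ closure (C j)` and the closure
of each `C k` contained in `K` is a face of both `closure (C i)` and `closure (C j)`, then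
`K` itself is a common face of `closure (C i)` and `closure (C j)`. -/
theorem common_face_of_intersection {n r : ℕ} (K : Set (Fin n → ℝ))
    (C : Fin r → Set (Fin n → ℝ))
    (hKclosed : IsClosed K) (hKconv : Convex ℝ K)
    (hKcone : ∀ x ∈ K, ∀ c : ℝ, 0 ≤ c → c • x ∈ K)
    (hCconv : ∀ k, Convex ℝ (C k))
    (hCcone : ∀ k, ∀ x ∈ C k, ∀ c : ℝ, 0 < c → c • x ∈ C k)
    (hCopen : ∀ k, intrinsicInterior ℝ (C k) = C k)
    (hdisj : ∀ k l, k ≠ l → Disjoint (C k) (C l))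
    (hcover : K = ⋃ k, C k)
    (i j : Fin r)
    (hK : K = closure (C i) ∩ closure (C j))
    (hface : ∀ k, closure (C k) ⊆ K →
      IsFaceOf (closure (C k)) (closure (C i)) ∧ IsFaceOf (closure (C k)) (closure (C j))) :
    IsFaceOf K (closure (C i)) ∧ IsFaceOf K (closure (C j)) := by
  have hsub : ∀ k, closure (C k) ⊆ K := fun k =>
    hKclosed.closure_subset_iff.mpr (hcover ▸ Set.subset_iUnion C k)
  constructor
  · refine ⟨fun x hx => (hK ▸ hx).1, hKconv, ?_⟩
    intro x hx y hy t ht0 ht1 hz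
    obtain ⟨k, hk⟩ : ∃ k, t • x + (1 - t) • y ∈ C k := by
      have := hcover ▸ hz; simpa using this
    obtain ⟨_, _, hf⟩ := (hface k (hsub k)).1
    obtain ⟨hxk, hyk⟩ := hf x hx y hy t ht0 ht1 (subset_closure hk)
    exact ⟨hsub k hxk, hsub k hyk⟩
  · refine ⟨fun x hx => (hK ▸ hx).2, hKconv, ?_⟩
    intro x hx y hy t ht0 ht1 hz
    obtain ⟨k, hk⟩ : ∃ k, t • x + (1 - t) • y ∈ C k := by
      have := hcover ▸ hz; simpa using this
    obtain ⟨_, _, hf⟩ := (hface k (hsub k)).2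
    obtain ⟨hxk, hyk⟩ := hf x hx y hy t ht0 ht1 (subset_closure hk)
    exact ⟨hsub k hxk, hsub k hyk⟩
end
end

section
/- Let ≺ be a local monomial order on ℕ^n (a total order compatible with addition such that α ⪯ 0 for all α ∈ ℕ^n). Then there exists a vector w ∈ ℝ^n with nonpositive components such that for all α, β ∈ ℕ^n, α ≺ β implies w·α ≤ w·β, and w is the first vector in a sequence of n vectors defining ≺ lexicographically (Robbiano-type representation). In particular, every local monomial order refines the partial order given by some w ∈ ℝ_{≤0}^n. -/
/-!
The differences `b - a` with `a ⪯ b` form a maximal positive cone in `ℤ^n`, so `≺` is the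
restriction of a total group order on `ℤ^n`. By Hahn's embedding theorem this ordered group embeds
into the lexicographically ordered Hahn series `ℝ⟦Γ⟧` over its finite Archimedean classes `Γ`.
Representatives of distinct classes are `ℤ`-linearly independent, so `Γ` has at most `n`
elements; the coefficient functionals of the embedding, indexed through `Γ ↪o Fin n`, are
additive maps `ℤ^n → ℝ`, i.e. the weight vectors. Since the first weight vector is
nondecreasing along `≺` and `eᵢ ≺ 0`, its entries are nonpositive.
-/

noncomputable section

open ArchimedeanClass HahnSeries

local notation "castℤ" => AddMonoidHom.compLeft (Nat.castAddMonoidHom ℤ) _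

section ArchimedeanClass

variable {M : Type*} [AddCommGroup M] [LinearOrder M] [IsOrderedAddMonoid M]

theorem ArchimedeanClass.linearIndependent_of_strictMono
    {K : Type*} [Ring K] [LinearOrder K] [IsOrderedRing K] [Archimedean K]
    [Module K M] [PosSMulMono K M] {ι : Type*} [LinearOrder ι]
    {a : ι → M} (hmono : StrictMono (mk ∘ a)) (hne : ∀ i, a i ≠ 0) :
    LinearIndependent K a := by
  classical
  -- a sum of terms in distinct classes lies in the smallest of them, hence is nonzero
  rw [linearIndependent_iff']
  intro s g hsum i hi
  by_contra hgi
  set t := s.filter (g · ≠ 0)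
  have ht : t.Nonempty := ⟨i, Finset.mem_filter.mpr ⟨hi, hgi⟩⟩
  have hclass : ∀ j ∈ t, mk (g j • a j) = mk (a j) := fun j hj =>
    mk_smul _ (Finset.mem_filter.mp hj).2
  have hsum_t : ∑ j ∈ t, g j • a j = 0 := by
    rw [← hsum]
    exact Finset.sum_filter_of_ne fun j _ h hj => h (by rw [hj, zero_smul])
  have hmono_t : StrictMonoOn (mk ∘ fun j => g j • a j) t := fun j hj k hk hjk => by
    simpa [hclass j hj, hclass k hk] using hmono hjk
  have hmin := mk_sum ht hmono_t
  rw [hsum_t, mk_zero, hclass _ (t.min'_mem ht), eq_comm, mk_eq_top_iff] at hmin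
  exact hne _ hmin

theorem FiniteArchimedeanClass.linearIndependent_out :
    LinearIndependent ℤ fun c : FiniteArchimedeanClass M => c.1.out :=
  linearIndependent_of_strictMono (fun c d h => by simpa [mk_out] using h)
    fun c h => c.2 (by rw [← mk_out c.1, h, mk_zero])

end ArchimedeanClass

theorem HahnSeries.pos_iff {Γ R : Type*} [LinearOrder Γ] [Zero R] [LinearOrder R]
    {x : Lex R⟦Γ⟧} :
    0 < x ↔ ∃ i, (∀ j < i, (ofLex x).coeff j = 0) ∧ 0 < (ofLex x).coeff i := by
  simp [lt_iff, eq_comm]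

theorem exists_lex_addMonoidHom_real_of_finrank_le (M : Type*) [AddCommGroup M] [LinearOrder M]
    [IsOrderedAddMonoid M] [Module.Finite ℤ M] {n : ℕ} (hn : Module.finrank ℤ M ≤ n) :
    ∃ ℓ : Fin n → (M →+ ℝ), ∀ a, 0 < a ↔ ∃ j, (∀ i < j, ℓ i a = 0) ∧ 0 < ℓ j a := by
  obtain ⟨f, hf, -⟩ := hahnEmbedding_isOrderedAddMonoid M
  have hli := FiniteArchimedeanClass.linearIndependent_out (M := M)
  have := hli.finite
  have := Fintype.ofFinite (FiniteArchimedeanClass M)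
  have hcard : Fintype.card (FiniteArchimedeanClass M) ≤ n :=
    hli.fintype_card_le_finrank.trans hn
  let e : FiniteArchimedeanClass M ↪o Fin n :=
    (Fintype.orderIsoFinOfCardEq _ rfl).symm.toOrderEmbedding.trans (Fin.castLEOrderEmb hcard)
  let F := (embDomainOrderAddMonoidHom e).comp f
  have hF : StrictMono F := (OrderHomClass.monotone F).strictMono_of_injective
    ((embDomainOrderAddMonoidHom_injective e).comp hf)
  refine ⟨fun j => AddMonoidHom.mk' (fun a => (ofLex (F a)).coeff j) (by simp), fun a => ?_⟩
  rw [← hF.lt_iff_lt, map_zero, HahnSeries.pos_iff]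
  rfl

theorem AddGroupCone.exists_lex_addMonoidHom_real {G : Type*} [AddCommGroup G]
    [Module.Finite ℤ G] (C : AddGroupCone G) [HasMemOrNegMem C] {n : ℕ}
    (hn : Module.finrank ℤ G ≤ n) :
    ∃ ℓ : Fin n → (G →+ ℝ), ∀ a, a ∈ C ∧ a ≠ 0 ↔ ∃ j, (∀ i < j, ℓ i a = 0) ∧ 0 < ℓ j a := by
  classical
  let := LinearOrder.mkOfAddGroupCone C
  have := IsOrderedAddMonoid.mkOfCone C
  obtain ⟨ℓ, hℓ⟩ := exists_lex_addMonoidHom_real_of_finrank_le G hn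
  refine ⟨ℓ, fun a => ?_⟩
  rw [← hℓ, lt_iff_le_and_ne]
  simp [eq_comm]

section StrictTotalOrder

variable {α : Type*} [AddCommSemigroup α] {r : α → α → Prop}

theorem rel_of_rel_add_left [IsStrictTotalOrder α r]
    (hadd : ∀ a b c, r a b → r (c + a) (c + b)) {a b c : α} (h : r (c + a) (c + b)) : r a b := by
  rcases trichotomous_of r a b with hab | rfl | hba
  · exact hab
  · exact absurd h (irrefl _)
  · exact absurd (_root_.trans h (hadd b a c hba)) (irrefl _)

theorem rel_iff_rel_of_add_eq_add [IsStrictTotalOrder α r]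
    (hadd : ∀ a b c, r a b → r (c + a) (c + b)) {a b c d : α}
    (h : b + c = a + d) : r a b ↔ r c d := by
  constructor <;> intro hr
  · apply rel_of_rel_add_left hadd (c := a)
    simpa [h, add_comm] using hadd a b c hr
  · apply rel_of_rel_add_left hadd (c := c)
    simpa [← h, add_comm] using hadd c d a hr

theorem rel_add_add_of_rel_of_reflGen [IsTrans α r] (hadd : ∀ a b c, r a b → r (c + a) (c + b))
    {a b c d : α} (hab : r a b) (hcd : Relation.ReflGen r c d) : r (a + c) (b + d) := by
  have hac : r (a + c) (b + c) := by simpa [add_comm] using hadd a b c hab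
  rcases hcd with _ | hcd
  · exact hac
  · exact _root_.trans hac (hadd c d b hcd)

theorem reflGen_add_add [IsTrans α r] (hadd : ∀ a b c, r a b → r (c + a) (c + b))
    {a b c d : α} (hab : Relation.ReflGen r a b) (hcd : Relation.ReflGen r c d) :
    Relation.ReflGen r (a + c) (b + d) := by
  rcases hab with _ | hab
  · rcases hcd with _ | hcd
    · exact .refl
    · exact .single (hadd c d a hcd)
  · exact .single (rel_add_add_of_rel_of_reflGen hadd hab hcd)

end StrictTotalOrder

section DiffCone

variable {σ : Type*}

theorem castℤ_injective : Function.Injective (castℤ : (σ → ℕ) →+ (σ → ℤ)) :=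
  fun _ _ h => funext fun i => Nat.cast_injective (congrFun h i)

variable (r : (σ → ℕ) → (σ → ℕ) → Prop) [IsStrictTotalOrder (σ → ℕ) r]

def diffCone (hadd : ∀ a b c, r a b → r (c + a) (c + b)) : AddGroupCone (σ → ℤ) where
  carrier := {v | ∃ a b, Relation.ReflGen r a b ∧ castℤ b - castℤ a = v}
  zero_mem' := ⟨0, 0, .refl, by simp⟩
  add_mem' := by
    rintro _ _ ⟨a, b, hab, rfl⟩ ⟨c, d, hcd, rfl⟩
    exact ⟨a + c, b + d, reflGen_add_add hadd hab hcd, by simp only [map_add]; abel⟩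
  eq_zero_of_mem_of_neg_mem' := by
    rintro _ ⟨a, b, hab, rfl⟩ ⟨c, d, hcd, h⟩
    rcases hab with _ | hab
    · exact sub_self _
    · have hsum : b + d = a + c := castℤ_injective (by simp only [map_add]; linear_combination h)
      have := rel_add_add_of_rel_of_reflGen hadd hab hcd
      rw [hsum] at this
      exact absurd this (irrefl _)

instance (hadd : ∀ a b c, r a b → r (c + a) (c + b)) : HasMemOrNegMem (diffCone r hadd) where
  mem_or_neg_mem v := by
    have hv : castℤ (fun i => (v i).toNat) - castℤ (fun i => (-v i).toNat) = v := by
      ext i; simp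
    rcases trichotomous_of r (fun i => (-v i).toNat) (fun i => (v i).toNat) with h | h | h
    · exact .inl ⟨_, _, .single h, hv⟩
    · exact .inl ⟨_, _, h ▸ .refl, hv⟩
    · exact .inr ⟨_, _, .single h, by rw [← neg_sub, hv]⟩

theorem rel_iff_mem_diffCone (hadd : ∀ a b c, r a b → r (c + a) (c + b)) {a b : σ → ℕ} :
    r a b ↔ castℤ b - castℤ a ∈ diffCone r hadd ∧ castℤ b - castℤ a ≠ 0 := by
  constructor
  · intro h
    refine ⟨⟨a, b, .single h, rfl⟩, fun h0 => irrefl (r := r) a ?_⟩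
    rwa [castℤ_injective (sub_eq_zero.mp h0)] at h
  · rintro ⟨⟨c, d, hcd, h⟩, hne⟩
    rcases hcd with _ | hcd
    · exact absurd (h ▸ sub_self _) hne
    · refine (rel_iff_rel_of_add_eq_add hadd (castℤ_injective ?_)).2 hcd
      simp only [map_add]
      linear_combination -h

end DiffCone

theorem udotN_eq_apply_castℤ {n : ℕ} (ℓ : (Fin n → ℤ) →+ ℝ) (a : Fin n → ℕ) :
    udotN (fun i => ℓ (Pi.single i 1)) a = ℓ (castℤ a) := by
  conv_rhs => rw [← Finset.univ_sum_single (castℤ a)]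
  simp [udotN, map_sum, mul_comm, ← nsmul_eq_mul, ← map_nsmul, ← Pi.single_smul]

/-- Robbiano-type representation of local monomial orders: every local monomial order `≺` on
`ℕ^n` is defined lexicographically by a sequence of `n` weight vectors, the first of which has
nonpositive components; in particular `≺` refines the partial order given by a vector
`w ∈ ℝ_{≤0}^n`. -/
theorem robbiano_local_order {n : ℕ} (hn : 0 < n)
    (prec : (Fin n → ℕ) → (Fin n → ℕ) → Prop)
    (htotal : ∀ a b, prec a b ∨ a = b ∨ prec b a)
    (hirr : ∀ a, ¬ prec a a)
    (htrans : ∀ a b c, prec a b → prec b c → prec a c)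
    (hadd : ∀ a b c, prec a b → prec (c + a) (c + b))
    (hloc : ∀ a, a ≠ 0 → prec a 0) :
    ∃ W : Fin n → (Fin n → ℝ),
      (∀ i, W ⟨0, hn⟩ i ≤ 0) ∧
      (∀ a b, prec a b ↔ ∃ j : Fin n,
        (∀ j' < j, udotN (W j') a = udotN (W j') b) ∧ udotN (W j) a < udotN (W j) b) ∧
      (∀ a b, prec a b → udotN (W ⟨0, hn⟩) a ≤ udotN (W ⟨0, hn⟩) b) := by
  have : IsStrictTotalOrder _ prec :=
    { trichotomous a b h₁ h₂ := ((htotal a b).resolve_left h₁).resolve_right h₂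
      irrefl := hirr
      trans := htrans }
  obtain ⟨ℓ, hℓ⟩ := (diffCone prec hadd).exists_lex_addMonoidHom_real (n := n) (by simp)
  let W : Fin n → Fin n → ℝ := fun j i => ℓ j (Pi.single i 1)
  have hlex : ∀ a b, prec a b ↔ ∃ j : Fin n,
      (∀ j' < j, udotN (W j') a = udotN (W j') b) ∧ udotN (W j) a < udotN (W j) b := by
    intro a b
    simp only [W, udotN_eq_apply_castℤ, rel_iff_mem_diffCone prec hadd, hℓ, map_sub, sub_eq_zero,
      sub_pos]
    simp only [eq_comm]
  have hfirst : ∀ a b, prec a b → udotN (W ⟨0, hn⟩) a ≤ udotN (W ⟨0, hn⟩) b := by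
    intro a b hab
    obtain ⟨j, heq, hlt⟩ := (hlex a b).1 hab
    by_cases hj : j = ⟨0, hn⟩
    · exact hj ▸ hlt.le
    · exact (heq _ (lt_of_le_of_ne (Nat.zero_le _) (Ne.symm hj))).le
  refine ⟨W, fun i => ?_, hlex, hfirst⟩
  simpa [udotN, Pi.single_apply] using hfirst _ _ (hloc (Pi.single i 1) (by simp))
end
end

section
/- Division is impossible in the ring of formal differential operators adapted to certain weight vectors: in the Weyl-type ring k[[x]]⟨∂⟩ in one variable with relation ∂x = x∂ + 1, let g = x + x^k ∂ for k ≥ 2. There do not exist q, r in k[[x]]⟨∂⟩ with x = q·g + r such that no monomial of r is divisible by x. -/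
/-! Filter operators by their order in `∂`. Right multiplication by a power series `b` keeps an
operator of order `≤ n` of order `≤ n` and multiplies its `∂ⁿ`-coefficient by `b`, because
`∂ⁿ b - b ∂ⁿ` has order `< n`. Hence if `q` has order `≤ n` with `∂ⁿ`-coefficient `a`, then in
`x = q g + r` the `∂ⁿ⁺¹`-coefficient of `r` is `-a xᵏ`. It is a constant only when `a = 0`, so
descending on `n` gives `q = 0`, and then `r = x` is not a constant. -/

noncomputable section

namespace DifferentialOperator

variable {S A : Type*} [Ring S] [Ring A] (ι : S →+* A) (D : A)

def ofCoeffs : (ℕ →₀ S) →+ A :=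
  Finsupp.liftAddHom fun β => (AddMonoidHom.mulRight (D ^ β)).comp ι.toAddMonoidHom

def orderLT (n : ℕ) : AddSubgroup A :=
  AddSubgroup.closure {P | ∃ a, ∃ β < n, ι a * D ^ β = P}

variable {ι D}

theorem ofCoeffs_apply (c : ℕ →₀ S) : ofCoeffs ι D c = c.sum fun β a => ι a * D ^ β := rfl

theorem ofCoeffs_single (β : ℕ) (a : S) : ofCoeffs ι D (Finsupp.single β a) = ι a * D ^ β := by
  simp [ofCoeffs]

theorem map_mul_pow_mem_orderLT (a : S) {β n : ℕ} (h : β < n) : ι a * D ^ β ∈ orderLT ι D n :=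
  AddSubgroup.subset_closure ⟨a, β, h, rfl⟩

theorem orderLT_mono : Monotone (orderLT ι D) := fun _ _ h =>
  AddSubgroup.closure_mono fun _ ⟨a, β, hβ, hP⟩ => ⟨a, β, hβ.trans_le h, hP⟩

theorem orderLT_zero : orderLT ι D 0 = ⊥ := by
  simp [orderLT]

theorem exists_ofCoeffs_mem_orderLT (c : ℕ →₀ S) : ∃ n, ofCoeffs ι D c ∈ orderLT ι D n := by
  obtain ⟨n, hn⟩ := Finset.exists_nat_subset_range c.support
  refine ⟨n, ?_⟩
  rw [ofCoeffs_apply, Finsupp.sum]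
  exact AddSubgroup.sum_mem _ fun β hβ => map_mul_pow_mem_orderLT _ (Finset.mem_range.1 (hn hβ))

theorem exists_ofCoeffs_eq_of_mem_orderLT {P : A} {n : ℕ} (hP : P ∈ orderLT ι D n) :
    ∃ p : ℕ →₀ S, (∀ β, n ≤ β → p β = 0) ∧ ofCoeffs ι D p = P := by
  induction hP using AddSubgroup.closure_induction with
  | mem P hP =>
    obtain ⟨a, β, hβ, rfl⟩ := hP
    exact ⟨Finsupp.single β a, fun γ hγ => Finsupp.single_eq_of_ne (by omega), ofCoeffs_single β a⟩
  | zero => exact ⟨0, fun _ _ => rfl, map_zero _⟩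
  | add P Q _ _ hP hQ =>
    obtain ⟨p, hp, rfl⟩ := hP
    obtain ⟨p', hp', rfl⟩ := hQ
    exact ⟨p + p', fun β hβ => by simp [hp β hβ, hp' β hβ], map_add _ _ _⟩
  | neg P _ hP =>
    obtain ⟨p, hp, rfl⟩ := hP
    exact ⟨-p, fun β hβ => by simp [hp β hβ], map_neg _ _⟩

theorem apply_eq_of_ofCoeffs_sub_mem_orderLT (hinj : Function.Injective (ofCoeffs ι D))
    {c : ℕ →₀ S} {b : S} {n : ℕ} (h : ofCoeffs ι D c - ι b * D ^ n ∈ orderLT ι D n) :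
    c n = b := by
  obtain ⟨p, hp, hpc⟩ := exists_ofCoeffs_eq_of_mem_orderLT h
  have hc : c = Finsupp.single n b + p := hinj (by rw [map_add, hpc, ofCoeffs_single]; abel)
  simp [hc, hp n le_rfl]

theorem exists_sub_mem_orderLT_of_mem_orderLT_succ {P : A} {n : ℕ}
    (hP : P ∈ orderLT ι D (n + 1)) : ∃ a, P - ι a * D ^ n ∈ orderLT ι D n := by
  induction hP using AddSubgroup.closure_induction with
  | mem P hP =>
    obtain ⟨a, β, hβ, rfl⟩ := hP
    rcases (Nat.lt_succ_iff.1 hβ).eq_or_lt with rfl | hβn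
    · exact ⟨a, by simp⟩
    · exact ⟨0, by simpa using map_mul_pow_mem_orderLT a hβn⟩
  | zero => exact ⟨0, by simp⟩
  | add P Q _ _ hP hQ =>
    obtain ⟨a, ha⟩ := hP
    obtain ⟨b, hb⟩ := hQ
    exact ⟨a + b, by simpa [add_mul, add_sub_add_comm] using add_mem ha hb⟩
  | neg P _ hP =>
    obtain ⟨a, ha⟩ := hP
    refine ⟨-a, ?_⟩
    rw [map_neg, neg_mul, sub_neg_eq_add, neg_add_eq_sub, ← neg_sub]
    exact neg_mem ha

theorem orderLT_le_comap {f : A →+ A} {m n : ℕ}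
    (hf : ∀ a, ∀ β < n, f (ι a * D ^ β) ∈ orderLT ι D m) :
    orderLT ι D n ≤ (orderLT ι D m).comap f :=
  (AddSubgroup.closure_le _).2 fun _ ⟨a, β, hβ, hP⟩ => hP ▸ hf a β hβ

theorem map_mul_mem_orderLT (b : S) {P : A} {n : ℕ} (hP : P ∈ orderLT ι D n) :
    ι b * P ∈ orderLT ι D n :=
  orderLT_le_comap (f := AddMonoidHom.mulLeft (ι b)) (fun a β hβ => by
    simpa [← mul_assoc] using map_mul_pow_mem_orderLT (ι := ι) (D := D) (b * a) hβ) hP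

theorem mul_D_mem_orderLT_succ {P : A} {n : ℕ} (hP : P ∈ orderLT ι D n) :
    P * D ∈ orderLT ι D (n + 1) :=
  orderLT_le_comap (f := AddMonoidHom.mulRight D) (fun a β hβ => by
    simpa [mul_assoc, ← pow_succ] using map_mul_pow_mem_orderLT a (Nat.succ_lt_succ hβ)) hP

section Derivation

variable {δ : S → S} (hδ : ∀ a, D * ι a = ι a * D + ι (δ a))
include hδ

theorem D_mul_mem_orderLT_succ {P : A} {n : ℕ} (hP : P ∈ orderLT ι D n) :
    D * P ∈ orderLT ι D (n + 1) :=
  orderLT_le_comap (f := AddMonoidHom.mulLeft D) (fun a β hβ => by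
    rw [AddMonoidHom.coe_mulLeft, ← mul_assoc, hδ, add_mul, mul_assoc, ← pow_succ']
    exact add_mem (map_mul_pow_mem_orderLT a (Nat.succ_lt_succ hβ))
      (map_mul_pow_mem_orderLT _ (hβ.trans n.lt_succ_self))) hP

theorem pow_mul_map_sub_mem_orderLT (n : ℕ) (a : S) :
    D ^ n * ι a - ι a * D ^ n ∈ orderLT ι D n := by
  induction n with
  | zero => simp
  | succ n ih =>
    have h : D ^ (n + 1) * ι a - ι a * D ^ (n + 1)
        = D * (D ^ n * ι a - ι a * D ^ n) + ι (δ a) * D ^ n := by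
      rw [pow_succ', ← mul_assoc (ι a), eq_sub_of_add_eq (hδ a).symm]; noncomm_ring
    rw [h]
    exact add_mem (D_mul_mem_orderLT_succ hδ ih) (map_mul_pow_mem_orderLT _ n.lt_succ_self)

theorem mul_map_mem_orderLT (a : S) {P : A} {n : ℕ} (hP : P ∈ orderLT ι D n) :
    P * ι a ∈ orderLT ι D n :=
  orderLT_le_comap (f := AddMonoidHom.mulRight (ι a)) (fun b β hβ => by
    have h : ι b * D ^ β * ι a = ι b * (D ^ β * ι a - ι a * D ^ β) + ι (b * a) * D ^ β := by
      rw [map_mul]; noncomm_ring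
    show ι b * D ^ β * ι a ∈ _
    rw [h]
    exact add_mem
      (map_mul_mem_orderLT b (orderLT_mono hβ.le (pow_mul_map_sub_mem_orderLT hδ β a)))
      (map_mul_pow_mem_orderLT _ hβ)) hP

theorem mul_sub_mem_orderLT_succ {q : A} {a : S} {n : ℕ}
    (hq : q - ι a * D ^ n ∈ orderLT ι D n) (u v : S) :
    q * (ι u + ι v * D) - ι (a * v) * D ^ (n + 1) ∈ orderLT ι D (n + 1) := by
  set P := q - ι a * D ^ n
  have hq' : q ∈ orderLT ι D (n + 1) := by
    simpa [P] using
      add_mem (orderLT_mono n.le_succ hq) (map_mul_pow_mem_orderLT a n.lt_succ_self)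
  have h : q * (ι u + ι v * D) - ι (a * v) * D ^ (n + 1)
      = q * ι u + (P * ι v + ι a * (D ^ n * ι v - ι v * D ^ n)) * D := by
    simp only [P, map_mul, pow_succ]; noncomm_ring
  rw [h]
  exact add_mem (mul_map_mem_orderLT hδ u hq') (mul_D_mem_orderLT_succ (add_mem
    (mul_map_mem_orderLT hδ v hq) (map_mul_mem_orderLT a (pow_mul_map_sub_mem_orderLT hδ n v))))

theorem apply_succ_eq_of_eq_mul_add_ofCoeffs (hinj : Function.Injective (ofCoeffs ι D))
    {q x : A} {a u v : S} {c : ℕ →₀ S} {n : ℕ} (hq : q - ι a * D ^ n ∈ orderLT ι D n)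
    (hx : x ∈ orderLT ι D 1) (h : x = q * (ι u + ι v * D) + ofCoeffs ι D c) :
    c (n + 1) = -(a * v) := by
  refine apply_eq_of_ofCoeffs_sub_mem_orderLT hinj ?_
  rw [eq_sub_of_add_eq' h.symm, map_neg, neg_mul, sub_neg_eq_add, sub_add]
  exact sub_mem (orderLT_mono (by omega) hx) (mul_sub_mem_orderLT_succ hδ hq u v)

end Derivation

end DifferentialOperator

theorem PowerSeries.eq_zero_of_coeff_mul_X_pow_eq_zero {R : Type*} [Semiring R]
    {a : PowerSeries R} {k : ℕ} (hk : 1 ≤ k) (h : ∀ α, 1 ≤ α → coeff α (a * X ^ k) = 0) :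
    a = 0 := by
  ext m
  rw [← coeff_mul_X_pow a k m, h _ (by omega), map_zero]

open DifferentialOperator

/-- Impossibility of division in the ring `k[[x]]⟨∂⟩` of formal differential operators in one
variable adapted to certain weight vectors.  The ring is presented abstractly: a ring `A`, a
ring map `ι : k[[x]] → A`, and an element `D ∈ A` (the derivation `∂`) satisfying the
commutation rule `D·ι(a) = ι(a)·D + ι(a')`, such that every element of `A` is uniquely a
finite sum `Σ_β ι(a_β)·D^β`.  For `g = x + x^k ∂` with `k ≥ 2`, there are no `q, r ∈ A` with
`x = q·g + r` such that no monomial of `r` is divisible by `x` (i.e. all the coefficient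
series of `r` are constants). -/
theorem no_division_in_formal_differential_operators
    {K : Type*} [Field K] {A : Type*} [Ring A]
    (ι : PowerSeries K →+* A) (D : A)
    (hrel : ∀ a : PowerSeries K, D * ι a = ι a * D + ι (PowerSeries.derivativeFun a))
    (hrep : ∀ P : A, ∃! c : ℕ →₀ PowerSeries K, P = c.sum fun β a => ι a * D ^ β)
    (k : ℕ) (hk : 2 ≤ k) :
    ¬ ∃ (q r : A) (c : ℕ →₀ PowerSeries K),
        ι PowerSeries.X = q * (ι PowerSeries.X + ι (PowerSeries.X ^ k) * D) + r ∧
        r = c.sum (fun β a => ι a * D ^ β) ∧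
        ∀ β : ℕ, ∀ α : ℕ, 1 ≤ α → PowerSeries.coeff α (c β) = 0 := by
  rintro ⟨q, r, c, hdiv, hr, hconst⟩
  have hinj : Function.Injective (ofCoeffs ι D) := fun _ _ h => (hrep _).unique rfl h
  rw [← ofCoeffs_apply] at hr
  subst hr
  have hx : ι PowerSeries.X ∈ orderLT ι D 1 := by
    simpa using map_mul_pow_mem_orderLT (ι := ι) (D := D) PowerSeries.X one_pos
  have hdescend : ∀ n, q ∈ orderLT ι D (n + 1) → q ∈ orderLT ι D n := fun n hn => by
    obtain ⟨a, ha⟩ := exists_sub_mem_orderLT_of_mem_orderLT_succ hn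
    have hc := apply_succ_eq_of_eq_mul_add_ofCoeffs hrel hinj ha hx hdiv
    have ha0 : a = 0 := PowerSeries.eq_zero_of_coeff_mul_X_pow_eq_zero (one_le_two.trans hk)
      fun α hα => by rw [← neg_eq_zero, ← map_neg, ← hc]; exact hconst _ α hα
    simpa [ha0] using ha
  have hq : q = 0 := by
    obtain ⟨qc, hqc, -⟩ := hrep q
    obtain ⟨n, hn⟩ : ∃ n, q ∈ orderLT ι D n := hqc ▸ exists_ofCoeffs_mem_orderLT qc
    induction n with
    | zero => simpa [orderLT_zero] using hn
    | succ n ih => exact ih (hdescend n hn)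
  rw [hq, zero_mul, zero_add] at hdiv
  have hc0 : c 0 = PowerSeries.X :=
    apply_eq_of_ofCoeffs_sub_mem_orderLT hinj (by simp [← hdiv, orderLT_zero])
  simpa [hc0] using hconst 0 1 le_rfl
end
end

section
/- Let I be an ideal of k[x₁,…,x_n] and u ∈ ℝ^n with all components strictly negative. Let O_alg = k[x]_{⟨x₁,…,x_n⟩} be the localization at the maximal ideal at the origin. Then the initial ideal of the extended ideal equals the initial ideal of I: in_u(O_alg·I) = in_u(I) as ideals of gr^u(k[x]) = k[x]. -/
open scoped Classical

noncomputable section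

/-- The `u`-weight of an exponent vector. -/
def wtR {n : ℕ} (u : Fin n → ℝ) (α : Fin n →₀ ℕ) : ℝ := ∑ i, u i * (α i : ℝ)

/-- `g` is the initial form `in_u(f)` of the nonzero power series `f`: for
`c = ord^u(f) = max{u·α | α ∈ supp f}` (attained), `g` consists of the terms of `f` of
`u`-weight `c`. -/
def IsInit {n : ℕ} (K : Type*) [Field K] (u : Fin n → ℝ)
    (f : MvPowerSeries (Fin n) K) (g : MvPolynomial (Fin n) K) : Prop :=
  f ≠ 0 ∧ ∃ c : ℝ,
    (∃ α, MvPowerSeries.coeff α f ≠ 0 ∧ wtR u α = c) ∧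
    (∀ α, MvPowerSeries.coeff α f ≠ 0 → wtR u α ≤ c) ∧
    (∀ α, MvPolynomial.coeff α g =
      if wtR u α = c then MvPowerSeries.coeff α f else 0)

/-!
Multiplying a power series `P` by a unit `q` of the local ring does not change its initial form
up to the scalar `q(0)`: a term of `q * P` of weight at least `ord^u(P)` can only come from the
constant term of `q`, because every other monomial of `q` has strictly negative weight. Hence
`in_u(q * P) = q(0) · in_u(P)`, so every generator of `in_u(O_alg·I)` is a nonzero multiple of a
generator of `in_u(I)`; the reverse inclusion is the case `q = 1`.
-/

section InitialForm

variable {n : ℕ} {K : Type*} [Field K] {u : Fin n → ℝ}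

lemma wtR_add (α β : Fin n →₀ ℕ) :
    wtR u (α + β) = wtR u α + wtR u β := by
  simp only [wtR, Finsupp.add_apply, Nat.cast_add, mul_add, Finset.sum_add_distrib]

lemma wtR_neg_of_ne_zero (hu : ∀ i, u i < 0) {α : Fin n →₀ ℕ} (hα : α ≠ 0) : wtR u α < 0 := by
  obtain ⟨i, hi⟩ := Finsupp.ne_iff.mp hα
  refine (Finset.sum_lt_sum (g := fun _ => (0 : ℝ))
    (fun j _ => mul_nonpos_of_nonpos_of_nonneg (hu j).le (by positivity))
    ⟨i, Finset.mem_univ i, mul_neg_of_neg_of_pos (hu i) ?_⟩).trans_eq Finset.sum_const_zero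
  exact_mod_cast Nat.pos_of_ne_zero hi

lemma coeff_mul_eq_constantCoeff_mul_of_le_wtR (hu : ∀ i, u i < 0)
    (q : MvPowerSeries (Fin n) K) {P : MvPowerSeries (Fin n) K} {c : ℝ}
    (hP : ∀ β, MvPowerSeries.coeff β P ≠ 0 → wtR u β ≤ c) {α : Fin n →₀ ℕ}
    (hα : c ≤ wtR u α) :
    MvPowerSeries.coeff α (q * P) =
      MvPowerSeries.constantCoeff q * MvPowerSeries.coeff α P := by
  rw [MvPowerSeries.coeff_mul, Finset.sum_eq_single ((0 : Fin n →₀ ℕ), α)]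
  · rfl
  · rintro ⟨β, γ⟩ hβγ hne
    rw [Finset.HasAntidiagonal.mem_antidiagonal] at hβγ
    have hβ : β ≠ 0 := by
      rintro rfl
      exact hne (by rw [← hβγ, zero_add])
    have hγ : c < wtR u γ := by
      have := wtR_neg_of_ne_zero hu hβ
      rw [← hβγ, wtR_add] at hα
      linarith
    have : MvPowerSeries.coeff γ P = 0 := by
      by_contra h
      exact (hP γ h).not_gt hγ
    rw [this, mul_zero]
  · intro h
    exact absurd (Finset.HasAntidiagonal.mem_antidiagonal.mpr (zero_add α)) h

lemma IsInit.mul_of_constantCoeff_ne_zero (hu : ∀ i, u i < 0)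
    {P : MvPowerSeries (Fin n) K} {g : MvPolynomial (Fin n) K} (hinit : IsInit K u P g)
    {q : MvPowerSeries (Fin n) K} (hq : MvPowerSeries.constantCoeff q ≠ 0) :
    IsInit K u (q * P) (MvPolynomial.C (MvPowerSeries.constantCoeff q) * g) := by
  obtain ⟨-, c, ⟨α₀, hα₀, hwα₀⟩, hbd, hcoeff⟩ := hinit
  have key := fun α => coeff_mul_eq_constantCoeff_mul_of_le_wtR hu q hbd (α := α)
  have hα₀' : MvPowerSeries.coeff α₀ (q * P) ≠ 0 := by
    rw [key α₀ hwα₀.ge]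
    exact mul_ne_zero hq hα₀
  refine ⟨fun h => hα₀' (by rw [h, map_zero]), c, ⟨α₀, hα₀', hwα₀⟩, ?_, ?_⟩
  · intro α hα
    by_contra! hgt
    have hPα : MvPowerSeries.coeff α P = 0 := by
      by_contra h
      exact (hbd α h).not_gt hgt
    exact hα (by rw [key α hgt.le, hPα, mul_zero])
  · intro α
    rw [MvPolynomial.coeff_C_mul, hcoeff α]
    split_ifs with hw
    · rw [key α hw.ge]
    · rw [mul_zero]

end InitialForm

/-- For an ideal `I ⊆ k[x]` and `u` with all components strictly negative,
`in_u(O_alg·I) = in_u(I)` as ideals of `gr^u(k[x]) = k[x]`, where `O_alg` is the localization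
of `k[x]` at the origin: elements of `O_alg·I` are power series `P` with `q·P = f` for some
`f ∈ I` and `q ∈ k[x]` with `q(0) ≠ 0`. -/
theorem initial_ideal_localization {n : ℕ} {K : Type*} [Field K]
    (I : Ideal (MvPolynomial (Fin n) K)) (u : Fin n → ℝ) (hu : ∀ i, u i < 0) :
    Ideal.span {g : MvPolynomial (Fin n) K |
        ∃ P : MvPowerSeries (Fin n) K,
          (∃ f ∈ I, ∃ q : MvPolynomial (Fin n) K, MvPolynomial.constantCoeff q ≠ 0 ∧
            (q : MvPowerSeries (Fin n) K) * P = (f : MvPowerSeries (Fin n) K)) ∧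
          IsInit K u P g} =
      Ideal.span {g : MvPolynomial (Fin n) K |
        ∃ f ∈ I, IsInit K u (f : MvPowerSeries (Fin n) K) g} := by
  apply le_antisymm
  · rw [Ideal.span_le]
    rintro g ⟨P, ⟨f, hfI, q, hq, hqP⟩, hinit⟩
    set q₀ := MvPolynomial.constantCoeff q
    have hmem : MvPolynomial.C q₀ * g ∈ Ideal.span {g : MvPolynomial (Fin n) K |
        ∃ f ∈ I, IsInit K u (f : MvPowerSeries (Fin n) K) g} :=
      Ideal.subset_span ⟨f, hfI, hqP ▸ hinit.mul_of_constantCoeff_ne_zero hu hq⟩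
    have hg : g = MvPolynomial.C q₀⁻¹ * (MvPolynomial.C q₀ * g) := by
      rw [← mul_assoc, ← map_mul, inv_mul_cancel₀ hq, map_one, one_mul]
    exact hg ▸ Ideal.mul_mem_left _ _ hmem
  · refine Ideal.span_mono fun g ⟨f, hfI, hinit⟩ => ⟨f, ⟨f, hfI, 1, ?_, ?_⟩, hinit⟩
    · rw [map_one]
      exact one_ne_zero
    · rw [MvPolynomial.coe_one, one_mul]
end
end

section
/- Let I be an ideal of k[x₁,…,x_n], u ∈ ℝ^n with all u_i < 0, and Ô = k[[x]]. Then in_u(Ô·I) = in_u(I) in k[x]. More precisely, for every P ∈ Ô·I, written P = Σ_j c_j(x) P_j with c_j ∈ k[[x]] and P_j ∈ I, the initial form in_u(P) lies in the ideal of k[x] generated by {in_u(f) | f ∈ I, f ≠ 0}. -/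
/-!
Since all `u i < 0`, only finitely many exponents have weight `≥ c`; they all lie below some `B`.
Truncating each coefficient `c_j` of `P = ∑ c_j P_j` at `B` gives a polynomial `Q = ∑ p_j P_j ∈ I`
with the same coefficients as `P` at every exponent `≤ B`, because the coefficients of a product
below `B` only involve coefficients of the factors below `B`. As `in_u(P)` only depends on the
coefficients of weight `≥ ord^u(P)`, it is also `in_u(Q)`.
-/

open scoped Classical

noncomputable section

namespace MvPowerSeries

variable {σ R : Type*} [DecidableEq σ] [CommSemiring R]

theorem trunc'_mul_congr {n : σ →₀ ℕ} {f f' g g' : MvPowerSeries σ R}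
    (hf : trunc' R n f = trunc' R n f') (hg : trunc' R n g = trunc' R n g') :
    trunc' R n (f * g) = trunc' R n (f' * g') := by
  ext m
  rw [coeff_trunc', coeff_trunc']
  split_ifs with hm
  · rw [← coeff_trunc'_mul_trunc'_eq_coeff_mul n _ _ hm,
      ← coeff_trunc'_mul_trunc'_eq_coeff_mul n _ _ hm, hf, hg]
  · rfl

theorem exists_mem_trunc'_eq_of_mem_span {I : Ideal (MvPolynomial σ R)} {P : MvPowerSeries σ R}
    (hP : P ∈ Ideal.span ((↑) '' (I : Set (MvPolynomial σ R)))) (n : σ →₀ ℕ) :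
    ∃ Q ∈ I, trunc' R n (Q : MvPowerSeries σ R) = trunc' R n P := by
  induction hP using Submodule.span_induction with
  | mem x hx =>
    obtain ⟨Q, hQI, rfl⟩ := hx
    exact ⟨Q, hQI, rfl⟩
  | zero => exact ⟨0, I.zero_mem, by simp⟩
  | add x y _ _ hx hy =>
    obtain ⟨Q, hQI, hQ⟩ := hx
    obtain ⟨Q', hQ'I, hQ'⟩ := hy
    exact ⟨Q + Q', I.add_mem hQI hQ'I, by simp only [MvPolynomial.coe_add, map_add, hQ, hQ']⟩
  | smul c x _ hx =>
    obtain ⟨Q, hQI, hQ⟩ := hx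
    refine ⟨trunc' R n c * Q, I.mul_mem_left _ hQI, ?_⟩
    rw [MvPolynomial.coe_mul, smul_eq_mul]
    exact trunc'_mul_congr (trunc'_trunc' le_rfl c) hQ

end MvPowerSeries

theorem wtR_le_mul_apply {n : ℕ} {u : Fin n → ℝ} (hu : ∀ i, u i ≤ 0) (α : Fin n →₀ ℕ)
    (i : Fin n) : wtR u α ≤ u i * α i :=
  calc wtR u α = u i * α i + ∑ j ∈ Finset.univ.erase i, u j * α j :=
        (Finset.add_sum_erase _ _ (Finset.mem_univ i)).symm
    _ ≤ u i * α i := add_le_of_nonpos_right <|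
        Finset.sum_nonpos fun j _ => mul_nonpos_of_nonpos_of_nonneg (hu j) (Nat.cast_nonneg _)

theorem exists_le_of_le_wtR {n : ℕ} {u : Fin n → ℝ} (hu : ∀ i, u i < 0) (c : ℝ) :
    ∃ B : Fin n →₀ ℕ, ∀ α, c ≤ wtR u α → α ≤ B := by
  refine ⟨Finsupp.equivFunOnFinite.symm fun i => ⌈c / u i⌉₊, fun α hα i => ?_⟩
  have hαi : (α i : ℝ) ≤ c / u i := by
    rw [le_div_iff_of_neg (hu i), mul_comm]
    exact hα.trans (wtR_le_mul_apply (fun j => (hu j).le) α i)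
  simpa using Nat.cast_le.mp (hαi.trans (Nat.le_ceil _))

theorem IsInit.exists_isInit_of_coeff_eq {n : ℕ} {K : Type*} [Field K] {u : Fin n → ℝ}
    {f : MvPowerSeries (Fin n) K} {g : MvPolynomial (Fin n) K} (h : IsInit K u f g) :
    ∃ c : ℝ, ∀ f' : MvPowerSeries (Fin n) K,
      (∀ α, c ≤ wtR u α → MvPowerSeries.coeff α f' = MvPowerSeries.coeff α f) →
        IsInit K u f' g := by
  obtain ⟨-, c, ⟨α₀, hα₀, hwα₀⟩, hmax, hg⟩ := h
  refine ⟨c, fun f' hf' => ⟨?_, c, ⟨α₀, ?_, hwα₀⟩, fun α hα => ?_, fun α => ?_⟩⟩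
  · rintro rfl
    exact hα₀ (by rw [← hf' α₀ hwα₀.ge, map_zero])
  · rwa [hf' α₀ hwα₀.ge]
  · by_contra! hlt
    exact hlt.not_ge (hmax α (hf' α hlt.le ▸ hα))
  · rw [hg α]
    split_ifs with hα
    · rw [hf' α hα.ge]
    · rfl

theorem exists_mem_isInit_of_mem_span {n : ℕ} {K : Type*} [Field K]
    {I : Ideal (MvPolynomial (Fin n) K)} {u : Fin n → ℝ} (hu : ∀ i, u i < 0)
    {P : MvPowerSeries (Fin n) K}
    (hP : P ∈ Ideal.span ((↑) '' (I : Set (MvPolynomial (Fin n) K))))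
    {g : MvPolynomial (Fin n) K} (hg : IsInit K u P g) :
    ∃ Q ∈ I, IsInit K u (Q : MvPowerSeries (Fin n) K) g := by
  obtain ⟨c, hc⟩ := hg.exists_isInit_of_coeff_eq
  obtain ⟨B, hB⟩ := exists_le_of_le_wtR hu c
  obtain ⟨Q, hQI, hQ⟩ := MvPowerSeries.exists_mem_trunc'_eq_of_mem_span hP B
  refine ⟨Q, hQI, hc _ fun α hα => ?_⟩
  simpa [MvPowerSeries.coeff_trunc', hB α hα] using congr_arg (MvPolynomial.coeff α) hQ

/-- For an ideal `I ⊆ k[x]` and `u` with all components strictly negative,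
`in_u(Ô·I) = in_u(I)` in `k[x]`, where `Ô = k[[x]]`.  More precisely, the initial form of any
`P ∈ Ô·I` lies in the ideal of `k[x]` generated by the initial forms of elements of `I`. -/
theorem initial_ideal_formal_completion {n : ℕ} {K : Type*} [Field K]
    (I : Ideal (MvPolynomial (Fin n) K)) (u : Fin n → ℝ) (hu : ∀ i, u i < 0) :
    (Ideal.span {g : MvPolynomial (Fin n) K |
        ∃ P ∈ Ideal.span
          ((fun f : MvPolynomial (Fin n) K => (f : MvPowerSeries (Fin n) K)) '' I),
          IsInit K u P g} =
      Ideal.span {g : MvPolynomial (Fin n) K |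
        ∃ f ∈ I, IsInit K u (f : MvPowerSeries (Fin n) K) g}) ∧
    ∀ P ∈ Ideal.span
        ((fun f : MvPolynomial (Fin n) K => (f : MvPowerSeries (Fin n) K)) '' I),
      ∀ g : MvPolynomial (Fin n) K, IsInit K u P g →
        g ∈ Ideal.span {g' : MvPolynomial (Fin n) K |
          ∃ f ∈ I, IsInit K u (f : MvPowerSeries (Fin n) K) g'} := by
  refine ⟨le_antisymm ?_ (Ideal.span_mono ?_),
    fun P hP g hg => Ideal.subset_span (exists_mem_isInit_of_mem_span hu hP hg)⟩
  · exact Ideal.span_le.mpr fun g ⟨P, hP, hg⟩ =>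
      Ideal.subset_span (exists_mem_isInit_of_mem_span hu hP hg)
  · rintro g ⟨f, hfI, hf⟩
    exact ⟨f, Ideal.subset_span ⟨f, hfI, rfl⟩, hf⟩
end
end

section
/- Let q ∈ k[x₁,…,x_n] with q(0) = 1, and let w = (u,·) be a weight vector with u_i < 0 for 1 ≤ i ≤ n₂ and u_i = 0 for n₂ < i ≤ n. Write q = 1 - v₀ - v₁ where v₀ ∈ k[x_{n₂+1},…,x_n] with v₀(0)=0 and v₁ lies in the ideal generated by x₁,…,x_{n₂}. Then in k[[x]], the initial form of 1/q with respect to u is in_u(1/q) = 1/(1 - v₀); in particular in_u(1/q) belongs to the localization k[x]_{⟨x_{n₂+1},…,x_n⟩}. -/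
/-!
Since `u ≤ 0`, a power series with nonzero constant term has `u`-order `0`, so its initial form
is its weight-zero part: the image under the substitution `xᵢ ↦ 0` for the variables of
negative weight. This substitution is a ring homomorphism, hence it commutes with inversion,
and it sends `q = 1 - v₀ - v₁` to `1 - v₀`.
-/

open scoped Classical

noncomputable section

/-- `g` is the initial form `in_u(f)` of the nonzero power series `f` (power series valued
version). -/
def IsInitS {n : ℕ} (K : Type*) [Field K] (u : Fin n → ℝ)
    (f g : MvPowerSeries (Fin n) K) : Prop :=
  f ≠ 0 ∧ ∃ c : ℝ,
    (∃ α, MvPowerSeries.coeff α f ≠ 0 ∧ wtR u α = c) ∧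
    (∀ α, MvPowerSeries.coeff α f ≠ 0 → wtR u α ≤ c) ∧
    (∀ α, MvPowerSeries.coeff α g =
      if wtR u α = c then MvPowerSeries.coeff α f else 0)

open MvPowerSeries

theorem MvPowerSeries.map_inv_of_constantCoeff_ne_zero {σ τ k : Type*} [Field k]
    (φ : MvPowerSeries σ k →+* MvPowerSeries τ k) {f : MvPowerSeries σ k}
    (hf : constantCoeff f ≠ 0) : φ f⁻¹ = (φ f)⁻¹ := by
  have hφf : constantCoeff (φ f) ≠ 0 := by
    have hunit : IsUnit (φ f) :=
      (isUnit_iff_constantCoeff.mpr (isUnit_iff_ne_zero.mpr hf)).map φ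
    exact isUnit_iff_ne_zero.mp (isUnit_iff_constantCoeff.mp hunit)
  rw [eq_comm, MvPowerSeries.inv_eq_iff_mul_eq_one hφf, ← map_mul,
    MvPowerSeries.inv_mul_cancel _ hf, map_one]

section WeightZeroPart

variable {n : ℕ} {K : Type*} [Field K] {u : Fin n → ℝ}

theorem nonpos_of_forall_lt_neg_of_forall_ge_zero {m : ℕ}
    (hu1 : ∀ i : Fin n, (i : ℕ) < m → u i < 0) (hu2 : ∀ i : Fin n, m ≤ (i : ℕ) → u i = 0) (i : Fin n) : u i ≤ 0 :=
  if hi : (i : ℕ) < m then (hu1 i hi).le else (hu2 i (not_lt.mp hi)).le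

theorem wtR_nonpos (hu : ∀ i, u i ≤ 0) (α : Fin n →₀ ℕ) : wtR u α ≤ 0 :=
  Finset.sum_nonpos fun i _ => mul_nonpos_of_nonpos_of_nonneg (hu i) (Nat.cast_nonneg _)

theorem wtR_eq_zero_iff (hu : ∀ i, u i ≤ 0) {α : Fin n →₀ ℕ} :
    wtR u α = 0 ↔ ∀ i ∈ α.support, u i = 0 := by
  rw [wtR, Finset.sum_eq_zero_iff_of_nonpos fun i _ =>
    mul_nonpos_of_nonpos_of_nonneg (hu i) (Nat.cast_nonneg _)]
  simp only [Finset.mem_univ, true_implies, mul_eq_zero, Nat.cast_eq_zero,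
    Finsupp.mem_support_iff]
  exact forall_congr' fun i => or_iff_not_imp_right

variable (K u) in
def weightZeroPart : MvPowerSeries (Fin n) K →+* MvPowerSeries (Fin n) K :=
  rescale fun i => if u i = 0 then 1 else 0

theorem coeff_weightZeroPart (hu : ∀ i, u i ≤ 0) (α : Fin n →₀ ℕ)
    (f : MvPowerSeries (Fin n) K) :
    coeff α (weightZeroPart K u f) = if wtR u α = 0 then coeff α f else 0 := by
  rw [weightZeroPart, coeff_rescale, Finsupp.prod]
  by_cases hα : ∀ i ∈ α.support, u i = 0
  · rw [if_pos ((wtR_eq_zero_iff hu).mpr hα),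
      Finset.prod_eq_one fun i hi => by rw [if_pos (hα i hi), one_pow], one_mul]
  · obtain ⟨i, hi, hui⟩ := not_forall₂.mp hα
    rw [if_neg (mt (wtR_eq_zero_iff hu).mp hα),
      Finset.prod_eq_zero hi (by rw [if_neg hui, zero_pow (Finsupp.mem_support_iff.mp hi)]),
      zero_mul]

theorem isInitS_weightZeroPart (hu : ∀ i, u i ≤ 0) {f : MvPowerSeries (Fin n) K}
    (hf : constantCoeff f ≠ 0) : IsInitS K u f (weightZeroPart K u f) := by
  refine ⟨fun h => hf (by rw [h, map_zero]), 0, ⟨0, ?_, ?_⟩, fun α _ => wtR_nonpos hu α,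
    fun α => coeff_weightZeroPart hu α f⟩
  · rwa [coeff_zero_eq_constantCoeff_apply]
  · simp [wtR]

theorem weightZeroPart_coe_eq_self (hu : ∀ i, u i ≤ 0) {p : MvPolynomial (Fin n) K}
    (hp : ∀ α ∈ p.support, wtR u α = 0) : weightZeroPart K u p = p := by
  ext α
  rw [coeff_weightZeroPart hu, ite_eq_left_iff, MvPolynomial.coeff_coe]
  exact fun hα => (MvPolynomial.notMem_support_iff.mp (mt (hp α) hα)).symm

theorem weightZeroPart_coe_eq_zero (hu : ∀ i, u i ≤ 0) {p : MvPolynomial (Fin n) K}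
    (hp : ∀ α ∈ p.support, wtR u α ≠ 0) : weightZeroPart K u p = 0 := by
  ext α
  rw [coeff_weightZeroPart hu, map_zero, ite_eq_right_iff, MvPolynomial.coeff_coe]
  exact fun hα => MvPolynomial.notMem_support_iff.mp (mt (hp α) (not_not.mpr hα))

theorem wtR_eq_zero_iff_forall_lt {m : ℕ} (hu1 : ∀ i : Fin n, (i : ℕ) < m → u i < 0)
    (hu2 : ∀ i : Fin n, m ≤ (i : ℕ) → u i = 0) {α : Fin n →₀ ℕ} :
    wtR u α = 0 ↔ ∀ i : Fin n, (i : ℕ) < m → α i = 0 := by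
  rw [wtR_eq_zero_iff (nonpos_of_forall_lt_neg_of_forall_ge_zero hu1 hu2)]
  refine ⟨fun h i hi => by_contra fun hαi => (hu1 i hi).ne (h i (by simpa)), fun h i hi => ?_⟩
  exact hu2 i (not_lt.mp fun him => Finsupp.mem_support_iff.mp hi (h i him))

end WeightZeroPart

theorem MvPolynomial.coe_sub {σ R : Type*} [CommRing R] (p r : MvPolynomial σ R) :
    ((p - r : MvPolynomial σ R) : MvPowerSeries σ R) = p - r :=
  map_sub coeToMvPowerSeries.ringHom p r

theorem MvPolynomial.constantCoeff_coe {σ R : Type*} [CommSemiring R] (p : MvPolynomial σ R) :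
    MvPowerSeries.constantCoeff (p : MvPowerSeries σ R) = constantCoeff p := by
  rw [← MvPowerSeries.coeff_zero_eq_constantCoeff_apply, coeff_coe,
    constantCoeff_eq]

theorem MvPolynomial.notMem_span_of_subset_range_X {σ R : Type*} [CommSemiring R]
    {s : Set (MvPolynomial σ R)} (hs : s ⊆ Set.range X) {p : MvPolynomial σ R}
    (hp : constantCoeff p ≠ 0) : p ∉ Ideal.span s := by
  refine fun hmem => hp ((Ideal.span_le (I := RingHom.ker constantCoeff)).mpr ?_ hmem)
  rintro _ hg
  obtain ⟨i, rfl⟩ := hs hg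
  exact MvPolynomial.constantCoeff_X R i

/-- Let `q ∈ k[x]` with `q(0) = 1`, written `q = 1 - v₀ - v₁` where `v₀` involves only the
variables `x_i` with `i ≥ m` and has zero constant term, and `v₁` lies in the ideal generated
by `x_1,…,x_m`.  For a weight `u` with `u_i < 0` for `i < m` and `u_i = 0` for `i ≥ m`, the
initial form of `1/q ∈ k[[x]]` is `in_u(1/q) = 1/(1 - v₀)`; in particular it belongs to the
localization `k[x]_{⟨x_{m+1},…,x_n⟩}`. -/
theorem initial_of_inverse {n m : ℕ} {K : Type*} [Field K] (u : Fin n → ℝ)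
    (hu1 : ∀ i : Fin n, (i : ℕ) < m → u i < 0)
    (hu2 : ∀ i : Fin n, m ≤ (i : ℕ) → u i = 0)
    (q v0 v1 : MvPolynomial (Fin n) K)
    (hq0 : MvPolynomial.constantCoeff q = 1)
    (hq : q = 1 - v0 - v1)
    (hv0vars : ∀ α ∈ v0.support, ∀ i : Fin n, (i : ℕ) < m → α i = 0)
    (hv00 : MvPolynomial.constantCoeff v0 = 0)
    (hv1 : ∀ α ∈ v1.support, ∃ i : Fin n, (i : ℕ) < m ∧ α i ≠ 0) :
    IsInitS K u ((q : MvPowerSeries (Fin n) K)⁻¹)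
        ((1 - (v0 : MvPowerSeries (Fin n) K))⁻¹) ∧
      ∃ a b : MvPolynomial (Fin n) K,
        b ∉ Ideal.span {g : MvPolynomial (Fin n) K | ∃ i : Fin n, m ≤ (i : ℕ) ∧
          g = MvPolynomial.X i} ∧
        (b : MvPowerSeries (Fin n) K) * (1 - (v0 : MvPowerSeries (Fin n) K))⁻¹ =
          (a : MvPowerSeries (Fin n) K) := by
  have hu : ∀ i, u i ≤ 0 := nonpos_of_forall_lt_neg_of_forall_ge_zero hu1 hu2
  have hqc : constantCoeff (q : MvPowerSeries (Fin n) K) ≠ 0 := by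
    rw [MvPolynomial.constantCoeff_coe, hq0]
    exact one_ne_zero
  have hv0c : MvPolynomial.constantCoeff (1 - v0) ≠ 0 := by
    rw [map_sub, map_one, hv00, sub_zero]
    exact one_ne_zero
  have hv0c' : constantCoeff ((1 - v0 : MvPolynomial (Fin n) K) : MvPowerSeries (Fin n) K) ≠ 0 :=
    (MvPolynomial.constantCoeff_coe _).trans_ne hv0c
  have hv0_wt : ∀ α ∈ v0.support, wtR u α = 0 := fun α hα =>
    (wtR_eq_zero_iff_forall_lt hu1 hu2).mpr (hv0vars α hα)
  have hv1_wt : ∀ α ∈ v1.support, wtR u α ≠ 0 := fun α hα hwα => by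
    obtain ⟨i, hi, hαi⟩ := hv1 α hα
    exact hαi ((wtR_eq_zero_iff_forall_lt hu1 hu2).mp hwα i hi)
  have hq_image : weightZeroPart K u q = 1 - (v0 : MvPowerSeries (Fin n) K) := by
    rw [hq, MvPolynomial.coe_sub, MvPolynomial.coe_sub, MvPolynomial.coe_one, map_sub, map_sub,
      map_one, weightZeroPart_coe_eq_self hu hv0_wt, weightZeroPart_coe_eq_zero hu hv1_wt,
      sub_zero]
  refine ⟨?_, 1, 1 - v0, ?_, ?_⟩
  · rw [← hq_image, ← map_inv_of_constantCoeff_ne_zero _ hqc]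
    exact isInitS_weightZeroPart hu (by rw [constantCoeff_inv]; exact inv_ne_zero hqc)
  · refine MvPolynomial.notMem_span_of_subset_range_X ?_ hv0c
    rintro _ ⟨i, -, rfl⟩
    exact ⟨i, rfl⟩
  · simpa only [MvPolynomial.coe_sub, MvPolynomial.coe_one] using
      MvPowerSeries.mul_inv_cancel _ hv0c'
end
end

section
/- Let I be an ideal of k[x₁,…,x_n] generated by f₁,…,f_r, let α ∈ (ℤ_{>0})^n, and let I^(h) ⊆ k[x,h] be the ideal generated by the α-homogenizations h_α(f₁),…,h_α(f_r). For weight vectors u, u' ∈ ℝ^n (assigning weight 0 to h), if in_u(I^(h)) = in_{u'}(I^(h)) then in_u(I) = in_{u'}(I). Hence the Gröbner fan of I^(h) refines the Gröbner fan of I. -/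
open scoped Classical

noncomputable section

/-- The `u`-weight of an exponent vector. -/
def wtF {n : ℕ} (u : Fin n → ℝ) (β : Fin n →₀ ℕ) : ℝ := ∑ i, u i * (β i : ℝ)

/-- The `u`-order of a polynomial: the maximal `u`-weight of its support (0 for the zero
polynomial). -/
def pord {n : ℕ} {K : Type*} [CommSemiring K] (u : Fin n → ℝ)
    (f : MvPolynomial (Fin n) K) : ℝ :=
  if h : f = 0 then 0
  else f.support.sup' (MvPolynomial.support_nonempty.mpr h) (wtF u)

/-- The initial form `in_u(f)`: the sum of the terms of `f` of maximal `u`-weight. -/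
def initForm {n : ℕ} {K : Type*} [CommSemiring K] (u : Fin n → ℝ)
    (f : MvPolynomial (Fin n) K) : MvPolynomial (Fin n) K :=
  ∑ β ∈ f.support.filter (fun β => wtF u β = pord u f),
    MvPolynomial.monomial β (MvPolynomial.coeff β f)

/-- The initial ideal `in_u(I)`. -/
def initIdeal {n : ℕ} {K : Type*} [CommSemiring K] (u : Fin n → ℝ)
    (I : Ideal (MvPolynomial (Fin n) K)) : Ideal (MvPolynomial (Fin n) K) :=
  Ideal.span {g | ∃ f ∈ I, f ≠ 0 ∧ g = initForm u f}

/-- `F ∈ k[x,h]` is the `α`-homogenization of `f ∈ k[x]`: `F` is `α`-homogeneous (where `h`,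
the last variable, has `α`-weight 1), `F|_{h=1} = f`, and the `α`-degree of `F` equals the
`α`-degree of `f`. -/
def IsHomogenization {n : ℕ} {K : Type*} [CommSemiring K] (α : Fin n → ℕ)
    (f : MvPolynomial (Fin n) K) (F : MvPolynomial (Fin (n + 1)) K) : Prop :=
  (MvPolynomial.aeval (fun j : Fin (n + 1) =>
      if h : (j : ℕ) < n then (MvPolynomial.X ⟨j, h⟩ : MvPolynomial (Fin n) K) else 1) F
    = f) ∧
  ∃ d : ℕ,
    (∀ β ∈ F.support, (∑ i : Fin n, α i * β i.castSucc) + β (Fin.last n) = d) ∧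
    (∀ γ ∈ f.support, ∑ i : Fin n, α i * γ i ≤ d) ∧
    (f ≠ 0 → ∃ γ ∈ f.support, ∑ i : Fin n, α i * γ i = d)

/-- Extension of a weight vector `u` on the `x`-variables by weight `0` on `h`. -/
def uext {n : ℕ} (u : Fin n → ℝ) : Fin (n + 1) → ℝ :=
  fun j => if h : (j : ℕ) < n then u ⟨j, h⟩ else 0

/-!
Setting `h = 1` is injective on the support of an `α`-homogeneous polynomial (the exponent of `h`
is determined by the others) and keeps `u`-weights, because `h` has `u`-weight `0`; so it commutes
with initial forms of homogeneous polynomials. Since `I^(h)` is `α`-homogeneous, the components of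
an initial form of an element of `I^(h)` are initial forms of homogeneous elements of `I^(h)`, and
every element of `I` is the dehomogenization of a homogeneous element of `I^(h)`. Hence `in_u(I)`
is the image of `in_u(I^(h))` under `h ↦ 1`.
-/

open MvPolynomial
open Finsupp (weight weight_apply)

section InitialForms

variable {N : ℕ} {K : Type*} [CommSemiring K]

lemma wtF_le_pord (v : Fin N → ℝ) {P : MvPolynomial (Fin N) K} {δ : Fin N →₀ ℕ}
    (hδ : δ ∈ P.support) : wtF v δ ≤ pord v P := by
  rw [pord, dif_neg (ne_zero_iff.mpr ⟨δ, mem_support_iff.mp hδ⟩)]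
  exact Finset.le_sup' _ hδ

lemma exists_wtF_eq_pord (v : Fin N → ℝ) {P : MvPolynomial (Fin N) K} (hP : P ≠ 0) :
    ∃ δ ∈ P.support, wtF v δ = pord v P := by
  rw [pord, dif_neg hP]
  obtain ⟨δ, hδ, hmax⟩ := Finset.exists_mem_eq_sup' (support_nonempty.mpr hP) (wtF v)
  exact ⟨δ, hδ, hmax.symm⟩

lemma coeff_initForm (v : Fin N → ℝ) (P : MvPolynomial (Fin N) K) (δ : Fin N →₀ ℕ) :
    coeff δ (initForm v P) = if wtF v δ = pord v P then coeff δ P else 0 := by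
  rw [initForm, coeff_sum]
  simp only [coeff_monomial, Finset.sum_ite_eq', Finset.mem_filter, mem_support_iff]
  by_cases hδ : coeff δ P = 0 <;> simp [hδ]

@[simp]
lemma initForm_zero (v : Fin N → ℝ) : initForm v (0 : MvPolynomial (Fin N) K) = 0 := by
  simp [initForm]

lemma weightedHomogeneousComponent_initForm {M : Type*} [AddCommMonoid M] (w : Fin N → M)
    (v : Fin N → ℝ) (P : MvPolynomial (Fin N) K) (m : M)
    (hm : weightedHomogeneousComponent w m (initForm v P) ≠ 0) :
    weightedHomogeneousComponent w m (initForm v P) =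
      initForm v (weightedHomogeneousComponent w m P) := by
  obtain ⟨δ₀, hδ₀⟩ := ne_zero_iff.mp hm
  simp only [coeff_weightedHomogeneousComponent, coeff_initForm] at hδ₀
  obtain ⟨hwδ₀, hvδ₀, hPδ₀⟩ : weight w δ₀ = m ∧ wtF v δ₀ = pord v P ∧ coeff δ₀ P ≠ 0 := by
    split_ifs at hδ₀ <;> simp_all
  -- the component is nonzero at `δ₀`, which has maximal `v`-weight already in `P`
  have hpord : pord v (weightedHomogeneousComponent w m P) = pord v P := by
    have hδ₀m : δ₀ ∈ (weightedHomogeneousComponent w m P).support := by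
      simp [support_weightedHomogeneousComponent, hwδ₀, hPδ₀]
    refine le_antisymm ?_ (hvδ₀ ▸ wtF_le_pord v hδ₀m)
    obtain ⟨δ, hδ, hδmax⟩ := exists_wtF_eq_pord v (ne_zero_iff.mpr ⟨δ₀, mem_support_iff.mp hδ₀m⟩)
    rw [support_weightedHomogeneousComponent, Finset.mem_filter] at hδ
    exact hδmax ▸ wtF_le_pord v hδ.1
  ext δ
  simp only [coeff_weightedHomogeneousComponent, coeff_initForm, hpord]
  split_ifs <;> rfl

end InitialForms

lemma sum_image_weight_weightedHomogeneousComponent {σ M R : Type*} [CommSemiring R]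
    [AddCommMonoid M] [DecidableEq M] (w : σ → M) (P : MvPolynomial σ R) :
    ∑ m ∈ P.support.image (weight w), weightedHomogeneousComponent w m P = P := by
  rw [← finsum_eq_sum_of_support_subset, sum_weightedHomogeneousComponent]
  intro m hm
  by_contra hm'
  exact hm (weightedHomogeneousComponent_eq_zero_of_notMem w P m hm')

section Dehomogenization

variable {n : ℕ} {K : Type*} [CommSemiring K]

def homWeight (α : Fin n → ℕ) : Fin (n + 1) → ℕ := Fin.snoc α 1

variable (n K) in
def dehomogenize : MvPolynomial (Fin (n + 1)) K →ₐ[K] MvPolynomial (Fin n) K :=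
  aeval fun j => if h : (j : ℕ) < n then X ⟨j, h⟩ else 1

def dropLast (δ : Fin (n + 1) →₀ ℕ) : Fin n →₀ ℕ :=
  Finsupp.equivFunOnFinite.symm fun i => δ i.castSucc

@[simp]
lemma dropLast_apply (δ : Fin (n + 1) →₀ ℕ) (i : Fin n) : dropLast δ i = δ i.castSucc := rfl

lemma weight_homWeight (α : Fin n → ℕ) (δ : Fin (n + 1) →₀ ℕ) :
    weight (homWeight α) δ = ∑ i, α i * δ i.castSucc + δ (Fin.last n) := by
  simp [weight_apply, Finsupp.sum_fintype, Fin.sum_univ_castSucc, homWeight, mul_comm]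

lemma wtF_uext (u : Fin n → ℝ) (δ : Fin (n + 1) →₀ ℕ) :
    wtF (uext u) δ = wtF u (dropLast δ) := by
  simp [wtF, uext, Fin.sum_univ_castSucc]

lemma dehomogenize_X_last : dehomogenize n K (X (Fin.last n)) = 1 := by
  simp [dehomogenize]

lemma dehomogenize_rename_castSucc (p : MvPolynomial (Fin n) K) :
    dehomogenize n K (rename Fin.castSucc p) = p := by
  rw [dehomogenize, aeval_rename]
  convert aeval_X_left_apply p
  ext i
  simp

lemma dehomogenize_surjective : Function.Surjective (dehomogenize n K) :=
  fun p => ⟨rename Fin.castSucc p, dehomogenize_rename_castSucc p⟩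

lemma dehomogenize_monomial (δ : Fin (n + 1) →₀ ℕ) (c : K) :
    dehomogenize n K (monomial δ c) = monomial (dropLast δ) c := by
  rw [dehomogenize, aeval_monomial, monomial_eq, Finsupp.prod_fintype _ _ (by simp),
    Finsupp.prod_fintype _ _ (by simp), Fin.prod_univ_castSucc]
  simp [algebraMap_eq]

lemma dehomogenize_eq_sum (P : MvPolynomial (Fin (n + 1)) K) :
    dehomogenize n K P = ∑ δ ∈ P.support, monomial (dropLast δ) (coeff δ P) := by
  conv_lhs => rw [P.as_sum]
  simp only [map_sum, dehomogenize_monomial]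

section Homogeneous

variable {α : Fin n → ℕ} {d : ℕ} {P : MvPolynomial (Fin (n + 1)) K}

lemma dropLast_injOn (hP : P.IsWeightedHomogeneous (homWeight α) d) :
    Set.InjOn dropLast (P.support : Set (Fin (n + 1) →₀ ℕ)) := by
  intro δ hδ δ' hδ' hdrop
  have hδd := hP (mem_support_iff.mp hδ)
  have hδ'd := hP (mem_support_iff.mp hδ')
  have hinit (i : Fin n) : δ i.castSucc = δ' i.castSucc := by
    rw [← dropLast_apply, ← dropLast_apply, hdrop]
  simp only [weight_homWeight, hinit] at hδd hδ'd
  ext j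
  cases j using Fin.lastCases with
  | last => omega
  | cast i => exact hinit i

lemma coeff_dropLast_dehomogenize (hP : P.IsWeightedHomogeneous (homWeight α) d)
    {δ : Fin (n + 1) →₀ ℕ} (hδ : δ ∈ P.support) :
    coeff (dropLast δ) (dehomogenize n K P) = coeff δ P := by
  rw [dehomogenize_eq_sum, coeff_sum, Finset.sum_eq_single_of_mem δ hδ]
  · rw [coeff_monomial, if_pos rfl]
  · intro δ' hδ' hne
    rw [coeff_monomial, if_neg fun h => hne (dropLast_injOn hP hδ' hδ h)]

lemma support_dehomogenize (hP : P.IsWeightedHomogeneous (homWeight α) d) :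
    (dehomogenize n K P).support = P.support.image dropLast := by
  refine Finset.Subset.antisymm (fun γ hγ => ?_) ?_
  · rw [dehomogenize_eq_sum] at hγ
    obtain ⟨δ, hδ, hγδ⟩ := Finset.mem_biUnion.mp (support_sum hγ)
    rw [Finset.mem_singleton.mp (support_monomial_subset hγδ)]
    exact Finset.mem_image_of_mem _ hδ
  · rintro γ hγ
    obtain ⟨δ, hδ, rfl⟩ := Finset.mem_image.mp hγ
    rw [mem_support_iff, coeff_dropLast_dehomogenize hP hδ]
    exact mem_support_iff.mp hδ

lemma dehomogenize_ne_zero (hP : P.IsWeightedHomogeneous (homWeight α) d) (h0 : P ≠ 0) :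
    dehomogenize n K P ≠ 0 := by
  rw [← support_nonempty, support_dehomogenize hP]
  exact (support_nonempty.mpr h0).image _

lemma pord_dehomogenize (u : Fin n → ℝ) (hP : P.IsWeightedHomogeneous (homWeight α) d) :
    pord u (dehomogenize n K P) = pord (uext u) P := by
  by_cases h0 : P = 0
  · simp [h0, pord]
  rw [pord, pord, dif_neg (dehomogenize_ne_zero hP h0), dif_neg h0]
  simp only [support_dehomogenize hP, Finset.sup'_image, Function.comp_def, wtF_uext]

lemma dehomogenize_initForm (u : Fin n → ℝ) (hP : P.IsWeightedHomogeneous (homWeight α) d) :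
    dehomogenize n K (initForm (uext u) P) = initForm u (dehomogenize n K P) := by
  have hfilter :
      (dehomogenize n K P).support.filter (fun γ => wtF u γ = pord u (dehomogenize n K P)) =
        (P.support.filter fun δ => wtF (uext u) δ = pord (uext u) P).image dropLast := by
    simp only [support_dehomogenize hP, Finset.filter_image, wtF_uext, pord_dehomogenize u hP]
  rw [initForm, initForm, map_sum, hfilter, Finset.sum_image fun δ hδ δ' hδ' =>
    dropLast_injOn hP (Finset.mem_filter.mp hδ).1 (Finset.mem_filter.mp hδ').1]
  refine Finset.sum_congr rfl fun δ hδ => ?_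
  rw [dehomogenize_monomial, coeff_dropLast_dehomogenize hP (Finset.mem_filter.mp hδ).1]

end Homogeneous

attribute [local instance] MvPolynomial.weightedGradedAlgebra

variable {α : Fin n → ℕ} {I : Ideal (MvPolynomial (Fin (n + 1)) K)}

lemma exists_isWeightedHomogeneous_dehomogenize_eq
    (hI : I.IsHomogeneous (weightedHomogeneousSubmodule K (homWeight α)))
    {P : MvPolynomial (Fin (n + 1)) K} (hP : P ∈ I) :
    ∃ Q ∈ I, ∃ d, Q.IsWeightedHomogeneous (homWeight α) d ∧
      dehomogenize n K Q = dehomogenize n K P := by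
  set S := P.support.image (weight (homWeight α))
  -- pad each component with the power of `h` that raises it to the top degree
  refine ⟨∑ m ∈ S, X (Fin.last n) ^ (S.sup id - m) *
      weightedHomogeneousComponent (homWeight α) m P, ?_, S.sup id, ?_, ?_⟩
  · exact Ideal.sum_mem _ fun m _ =>
      I.mul_mem_left _ (weightedHomogeneousComponent_mem_of_mem K _ hI hP m)
  · refine IsWeightedHomogeneous.sum _ _ _ fun m hm => ?_
    have hX := (isWeightedHomogeneous_X K (homWeight α) (Fin.last n)).pow (S.sup id - m)
    have hdeg : (S.sup id - m) • homWeight α (Fin.last n) + m = S.sup id := by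
      have : m ≤ S.sup id := Finset.le_sup (f := id) hm
      simp only [homWeight, Fin.snoc_last, smul_eq_mul, mul_one]
      omega
    simpa only [hdeg] using hX.mul (weightedHomogeneousComponent_isWeightedHomogeneous m P)
  · conv_rhs => rw [← sum_image_weight_weightedHomogeneousComponent (homWeight α) P]
    simp [S, dehomogenize_X_last]

lemma initIdeal_map_dehomogenize
    (hI : I.IsHomogeneous (weightedHomogeneousSubmodule K (homWeight α))) (u : Fin n → ℝ) :
    initIdeal u (I.map (dehomogenize n K)) = (initIdeal (uext u) I).map (dehomogenize n K) := by
  apply le_antisymm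
  · refine Ideal.span_le.mpr ?_
    rintro _ ⟨g, hg, hg0, rfl⟩
    obtain ⟨P, hP, rfl⟩ := (Ideal.mem_map_iff_of_surjective _ dehomogenize_surjective).mp hg
    obtain ⟨Q, hQ, d, hQd, hQP⟩ := exists_isWeightedHomogeneous_dehomogenize_eq hI hP
    have hQ0 : Q ≠ 0 := by rintro rfl; exact hg0 (by rw [← hQP, map_zero])
    rw [← hQP, ← dehomogenize_initForm u hQd]
    exact Ideal.mem_map_of_mem _ (Ideal.subset_span ⟨Q, hQ, hQ0, rfl⟩)
  · refine Ideal.map_le_iff_le_comap.mpr (Ideal.span_le.mpr ?_)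
    rintro _ ⟨P, hP, -, rfl⟩
    rw [SetLike.mem_coe, Ideal.mem_comap,
      ← sum_image_weight_weightedHomogeneousComponent (homWeight α) (initForm (uext u) P),
      map_sum]
    refine Ideal.sum_mem _ fun m _ => ?_
    by_cases hm : weightedHomogeneousComponent (homWeight α) m (initForm (uext u) P) = 0
    · simp [hm]
    have hPm := weightedHomogeneousComponent_isWeightedHomogeneous (w := homWeight α) m P
    have hPm0 : weightedHomogeneousComponent (homWeight α) m P ≠ 0 := by
      intro h0
      exact hm (by rw [weightedHomogeneousComponent_initForm _ _ _ _ hm, h0, initForm_zero])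
    rw [weightedHomogeneousComponent_initForm _ _ _ _ hm, dehomogenize_initForm u hPm]
    exact Ideal.subset_span ⟨_, Ideal.mem_map_of_mem _
      (weightedHomogeneousComponent_mem_of_mem K _ hI hP m), dehomogenize_ne_zero hPm hPm0, rfl⟩

lemma initIdeal_span_eq_map_initIdeal_span {r : ℕ} {f : Fin r → MvPolynomial (Fin n) K}
    {F : Fin r → MvPolynomial (Fin (n + 1)) K} (hF : ∀ i, IsHomogenization α (f i) (F i))
    (u : Fin n → ℝ) :
    initIdeal u (Ideal.span (Set.range f)) =
      (initIdeal (uext u) (Ideal.span (Set.range F))).map (dehomogenize n K) := by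
  have hI : (Ideal.span (Set.range F)).IsHomogeneous
      (weightedHomogeneousSubmodule K (homWeight α)) := by
    refine Ideal.homogeneous_span _ _ (Set.forall_mem_range.mpr fun i => ?_)
    obtain ⟨d, hd, -⟩ := (hF i).2
    refine ⟨d, (mem_weightedHomogeneousSubmodule _ _ _ _).mpr fun δ hδ => ?_⟩
    rw [weight_homWeight]
    exact hd δ (mem_support_iff.mpr hδ)
  have hmap : (Ideal.span (Set.range F)).map (dehomogenize n K) = Ideal.span (Set.range f) := by
    rw [Ideal.map_span, ← Set.range_comp]
    exact congrArg (Ideal.span ∘ Set.range) (funext fun i => (hF i).1)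
  rw [← initIdeal_map_dehomogenize hI, hmap]

end Dehomogenization

theorem homogenized_fan_refines_general {n r : ℕ} {K : Type*} [Field K]
    (α : Fin n → ℕ)
    (f : Fin r → MvPolynomial (Fin n) K) (F : Fin r → MvPolynomial (Fin (n + 1)) K)
    (hF : ∀ i, IsHomogenization α (f i) (F i))
    (u u' : Fin n → ℝ)
    (h : initIdeal (uext u) (Ideal.span (Set.range F)) =
      initIdeal (uext u') (Ideal.span (Set.range F))) :
    initIdeal u (Ideal.span (Set.range f)) = initIdeal u' (Ideal.span (Set.range f)) := by
  rw [initIdeal_span_eq_map_initIdeal_span hF, initIdeal_span_eq_map_initIdeal_span hF, h]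

/-- Let `I = ⟨f_1,…,f_r⟩ ⊆ k[x]`, `α` a positive weight vector, and
`I^(h) = ⟨h_α(f_1),…,h_α(f_r)⟩ ⊆ k[x,h]`.  If two weight vectors give the same initial ideal
of `I^(h)` then they give the same initial ideal of `I`; hence the Gröbner fan of `I^(h)`
refines that of `I`. -/
theorem homogenized_fan_refines {n r : ℕ} {K : Type*} [Field K]
    (α : Fin n → ℕ) (hα : ∀ i, 0 < α i)
    (f : Fin r → MvPolynomial (Fin n) K) (F : Fin r → MvPolynomial (Fin (n + 1)) K)
    (hF : ∀ i, IsHomogenization α (f i) (F i))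
    (u u' : Fin n → ℝ)
    (h : initIdeal (uext u) (Ideal.span (Set.range F)) =
      initIdeal (uext u') (Ideal.span (Set.range F))) :
    initIdeal u (Ideal.span (Set.range f)) = initIdeal u' (Ideal.span (Set.range f)) :=
  homogenized_fan_refines_general α f F hF u u' h
end
end

section
/- Fix the standard division setup in k[[x]]: let ≺ be a local monomial order on ℕ^n, g₁,…,g_r ∈ k[[x]] nonzero, and define Δ₁ = exp_≺(g₁) + ℕ^n, Δ_j = (exp_≺(g_j) + ℕ^n) \ (Δ₁ ∪ ⋯ ∪ Δ_{j-1}) for j > 1, and Δ̄ = ℕ^n \ ⋃_j Δ_j. Then for the division f = Σ_j q_j g_j + R satisfying supp(q_j) + exp_≺(g_j) ⊆ Δ_j and supp(R) ⊆ Δ̄, the quotients and remainder are unique: if (q_j, R) and (q'_j, R') both satisfy these conditions for the same f, then q_j = q'_j for all j and R = R'. -/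
/-!
Subtracting the two divisions gives `Σ_j (q_j - q'_j) g_j + (R - R') = 0`. Each nonzero summand
has its leading exponent in its own region: `exp (q_j - q'_j) + exp g_j ∈ Δ_j` for the `j`-th
one and `exp (R - R') ∈ Δ̄`. The regions are disjoint, so these exponents are distinct, and the
`≺`-largest of them is hit by exactly one summand; the coefficient of the sum there is nonzero.
-/

noncomputable section

/-- The region `Δ_j = (exp(g_j) + ℕ^n) \ (Δ_1 ∪ ⋯ ∪ Δ_{j-1})` of the partition of `ℕ^n`
associated with leading exponents `e j`. -/
def DeltaJ {n r : ℕ} (e : Fin r → (Fin n →₀ ℕ)) (j : Fin r) : Set (Fin n →₀ ℕ) :=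
  {β | (∃ γ, β = e j + γ) ∧ ∀ j' : Fin r, j' < j → ¬ ∃ γ, β = e j' + γ}

/-- The remainder region `Δ̄ = ℕ^n \ ⋃_j Δ_j`. -/
def DeltaBar {n r : ℕ} (e : Fin r → (Fin n →₀ ℕ)) : Set (Fin n →₀ ℕ) :=
  {β | ∀ j : Fin r, β ∉ DeltaJ e j}

open Finset Function

theorem Finset.exists_forall_not_rel_image {ι β : Type*} (r : β → β → Prop)
    [IsStrictTotalOrder β r] {s : Finset ι} (hs : s.Nonempty) (f : ι → β) :
    ∃ i ∈ s, ∀ j ∈ s, ¬ r (f i) (f j) := by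
  classical
  let := linearOrderOfSTO r
  obtain ⟨i, hi, hmax⟩ := s.exists_max_image f hs
  exact ⟨i, hi, fun j hj => not_lt_of_ge (hmax j hj)⟩

theorem rel_add_of_eq_or_rel {M : Type*} [AddCommMagma M] {prec : M → M → Prop}
    [IsTrans M prec] (hadd : ∀ a b c, prec a b → prec (c + a) (c + b)) {a b α β : M}
    (ha : a = α ∨ prec a α) (hb : b = β ∨ prec b β) (hne : ¬(a = α ∧ b = β)) :
    prec (a + b) (α + β) := by
  have hadd' : ∀ {a b} c, prec a b → prec (a + c) (b + c) := fun c h => by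
    simpa only [add_comm c] using hadd _ _ c h
  rcases ha with rfl | ha <;> rcases hb with rfl | hb
  · exact absurd ⟨rfl, rfl⟩ hne
  · exact hadd _ _ _ hb
  · exact hadd' _ ha
  · exact trans_of prec (hadd' b ha) (hadd _ _ α hb)

namespace MvPowerSeries

variable {σ R : Type*}

section Semiring

variable [Semiring R] (prec : (σ →₀ ℕ) → (σ →₀ ℕ) → Prop)

/-- `exp_≺ f = β`. -/
def IsLeadingExp (f : MvPowerSeries σ R) (β : σ →₀ ℕ) : Prop :=
  coeff β f ≠ 0 ∧ ∀ γ, coeff γ f ≠ 0 → γ = β ∨ prec γ β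

variable {prec}

theorem IsLeadingExp.ne_zero {f : MvPowerSeries σ R} {β : σ →₀ ℕ}
    (h : IsLeadingExp prec f β) : f ≠ 0 := by
  rintro rfl
  exact h.1 (map_zero _)

theorem IsLeadingExp.mul [NoZeroDivisors R] [IsStrictOrder (σ →₀ ℕ) prec]
    (hadd : ∀ a b c, prec a b → prec (c + a) (c + b))
    {p g : MvPowerSeries σ R} {α β : σ →₀ ℕ}
    (hp : IsLeadingExp prec p α) (hg : IsLeadingExp prec g β) :
    IsLeadingExp prec (p * g) (α + β) := by
  classical
  have hterm : ∀ a b, coeff a p * coeff b g ≠ 0 → (a = α ∧ b = β) ∨ prec (a + b) (α + β) :=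
    fun a b hab => or_iff_not_imp_left.mpr <| rel_add_of_eq_or_rel hadd
      (hp.2 a (left_ne_zero_of_mul hab)) (hg.2 b (right_ne_zero_of_mul hab))
  constructor
  · rw [coeff_mul, sum_eq_single (α, β)]
    · exact mul_ne_zero hp.1 hg.1
    · rintro ⟨a, b⟩ hab hne
      by_contra hz
      rcases hterm a b hz with ⟨rfl, rfl⟩ | hlt
      · exact hne rfl
      · rw [mem_antidiagonal.mp hab] at hlt
        exact irrefl_of prec _ hlt
    · exact fun h => (h (mem_antidiagonal.mpr rfl)).elim
  · intro γ hγ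
    rw [coeff_mul] at hγ
    obtain ⟨⟨a, b⟩, hab, hz⟩ := exists_ne_zero_of_sum_ne_zero hγ
    rw [← mem_antidiagonal.mp hab]
    rcases hterm a b hz with ⟨rfl, rfl⟩ | hlt
    exacts [Or.inl rfl, Or.inr hlt]

theorem eq_zero_of_sum_eq_zero_of_pairwise_disjoint [IsStrictTotalOrder (σ →₀ ℕ) prec]
    {ι : Type*} [Fintype ι] {h : ι → MvPowerSeries σ R} {P : ι → Set (σ →₀ ℕ)}
    (hP : Pairwise (Disjoint on P))
    (hlead : ∀ i, h i ≠ 0 → ∃ β ∈ P i, IsLeadingExp prec (h i) β)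
    (hsum : ∑ i, h i = 0) (i : ι) : h i = 0 := by
  classical
  by_contra hi
  choose! L hLP hL using hlead
  obtain ⟨i₀, hi₀, hmax⟩ := exists_forall_not_rel_image prec
    (s := univ.filter (h · ≠ 0)) ⟨i, mem_filter.mpr ⟨mem_univ i, hi⟩⟩ L
  have hi₀ : h i₀ ≠ 0 := (mem_filter.mp hi₀).2
  have hother : ∀ j ≠ i₀, coeff (L i₀) (h j) = 0 := by
    intro j hj
    by_contra hz
    have hj0 : h j ≠ 0 := fun h0 => hz (by rw [h0, map_zero])
    rcases (hL j hj0).2 _ hz with heq | hlt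
    · exact Set.disjoint_left.mp (hP hj.symm) (hLP i₀ hi₀) (heq ▸ hLP j hj0)
    · exact hmax j (mem_filter.mpr ⟨mem_univ j, hj0⟩) hlt
  have hcoeff := congrArg (coeff (L i₀)) hsum
  rw [map_sum, sum_eq_single i₀ (fun j _ hj => hother j hj) (by simp), map_zero] at hcoeff
  exact (hL i₀ hi₀).1 hcoeff

end Semiring

section Ring

variable [Ring R]

theorem mem_of_coeff_sub_ne_zero {s : Set (σ →₀ ℕ)} {f g : MvPowerSeries σ R}
    (hf : ∀ β, coeff β f ≠ 0 → β ∈ s) (hg : ∀ β, coeff β g ≠ 0 → β ∈ s) (β : σ →₀ ℕ)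
    (hβ : coeff β (f - g) ≠ 0) : β ∈ s := by
  by_contra hs
  rw [map_sub, not_imp_comm.mp (hf β) hs, not_imp_comm.mp (hg β) hs, sub_zero] at hβ
  exact hβ rfl

end Ring

end MvPowerSeries

open MvPowerSeries

theorem pairwise_disjoint_deltaJ {n r : ℕ} (e : Fin r → (Fin n →₀ ℕ)) :
    Pairwise (Disjoint on DeltaJ e) := by
  intro i j hij
  refine Set.disjoint_left.mpr fun β hi hj => ?_
  rcases hij.lt_or_gt with h | h
  exacts [hj.2 i h hi.1, hi.2 j h hj.1]

theorem pairwise_disjoint_deltaBar_deltaJ {n r : ℕ} (e : Fin r → (Fin n →₀ ℕ)) :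
    Pairwise (Disjoint on fun o : Option (Fin r) => o.elim (DeltaBar e) (DeltaJ e)) := by
  have hbar : ∀ j, Disjoint (DeltaBar e) (DeltaJ e j) := fun j =>
    Set.disjoint_left.mpr fun _ hβ => hβ j
  rintro (_ | i) (_ | j) hij
  · exact absurd rfl hij
  · exact hbar j
  · exact (hbar i).symm
  · exact pairwise_disjoint_deltaJ e (Option.some_injective _ |>.ne_iff.mp hij)

theorem division_uniqueness_general {n r : ℕ} {K : Type*} [Field K]
    (prec : (Fin n →₀ ℕ) → (Fin n →₀ ℕ) → Prop)
    (htotal : ∀ a b, prec a b ∨ a = b ∨ prec b a)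
    (hirr : ∀ a, ¬ prec a a)
    (htrans : ∀ a b c, prec a b → prec b c → prec a c)
    (hadd : ∀ a b c, prec a b → prec (c + a) (c + b))
    (hmax : ∀ f : MvPowerSeries (Fin n) K, f ≠ 0 → ∃ β, MvPowerSeries.coeff (R := K) β f ≠ 0 ∧
      ∀ γ, MvPowerSeries.coeff (R := K) γ f ≠ 0 → γ = β ∨ prec γ β)
    (g : Fin r → MvPowerSeries (Fin n) K)
    (e : Fin r → (Fin n →₀ ℕ))
    (he : ∀ j, MvPowerSeries.coeff (R := K) (e j) (g j) ≠ 0 ∧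
      ∀ γ, MvPowerSeries.coeff (R := K) γ (g j) ≠ 0 → γ = e j ∨ prec γ (e j))
    (f R R' : MvPowerSeries (Fin n) K) (q q' : Fin r → MvPowerSeries (Fin n) K)
    (hdiv : f = ∑ j, q j * g j + R)
    (hdiv' : f = ∑ j, q' j * g j + R')
    (hq : ∀ j, ∀ β, MvPowerSeries.coeff (R := K) β (q j) ≠ 0 → (β + e j) ∈ DeltaJ e j)
    (hq' : ∀ j, ∀ β, MvPowerSeries.coeff (R := K) β (q' j) ≠ 0 → (β + e j) ∈ DeltaJ e j)
    (hR : ∀ β, MvPowerSeries.coeff (R := K) β R ≠ 0 → β ∈ DeltaBar e)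
    (hR' : ∀ β, MvPowerSeries.coeff (R := K) β R' ≠ 0 → β ∈ DeltaBar e) :
    q = q' ∧ R = R' := by
  have : IsStrictTotalOrder _ prec :=
    { trichotomous a b hab hba := ((htotal a b).resolve_left hab).resolve_right hba
      irrefl := hirr
      trans := htrans }
  let T : Option (Fin r) → MvPowerSeries (Fin n) K :=
    fun o => o.elim (R - R') fun j => (q j - q' j) * g j
  have hsum : ∑ o, T o = 0 := by
    simp only [T, Fintype.sum_option, Option.elim, sub_mul, Finset.sum_sub_distrib]
    linear_combination hdiv.symm.trans hdiv'
  have hlead :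
      ∀ o, T o ≠ 0 → ∃ β ∈ o.elim (DeltaBar e) (DeltaJ e), IsLeadingExp prec (T o) β := by
    rintro (_ | j) hT
    · obtain ⟨β, hβ⟩ := hmax _ hT
      exact ⟨β, mem_of_coeff_sub_ne_zero hR hR' β hβ.1, hβ⟩
    · obtain ⟨α, hα⟩ := hmax _ (left_ne_zero_of_mul hT)
      exact ⟨α + e j,
        mem_of_coeff_sub_ne_zero (s := (· + e j) ⁻¹' DeltaJ e j) (hq j) (hq' j) α hα.1,
        IsLeadingExp.mul hadd hα (he j)⟩
  have hT := eq_zero_of_sum_eq_zero_of_pairwise_disjoint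
    (pairwise_disjoint_deltaBar_deltaJ e) hlead hsum
  refine ⟨funext fun j => sub_eq_zero.mp ?_, sub_eq_zero.mp (hT none)⟩
  by_contra hne
  obtain ⟨α, hα⟩ := hmax _ hne
  exact (IsLeadingExp.mul hadd hα (he j)).ne_zero (hT (some j))

/-- Uniqueness of quotients and remainder in the division of formal power series with respect
to a local monomial order `≺`: if `f = Σ_j q_j g_j + R = Σ_j q'_j g_j + R'` with
`supp(q_j) + exp(g_j) ⊆ Δ_j` (same for `q'`), `supp(R), supp(R') ⊆ Δ̄`, then `q = q'` and
`R = R'`. -/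
theorem division_uniqueness {n r : ℕ} {K : Type*} [Field K]
    (prec : (Fin n →₀ ℕ) → (Fin n →₀ ℕ) → Prop)
    (htotal : ∀ a b, prec a b ∨ a = b ∨ prec b a)
    (hirr : ∀ a, ¬ prec a a)
    (htrans : ∀ a b c, prec a b → prec b c → prec a c)
    (hadd : ∀ a b c, prec a b → prec (c + a) (c + b))
    (hloc : ∀ a, a ≠ 0 → prec a 0)
    (hmax : ∀ f : MvPowerSeries (Fin n) K, f ≠ 0 → ∃ β, MvPowerSeries.coeff (R := K) β f ≠ 0 ∧
      ∀ γ, MvPowerSeries.coeff (R := K) γ f ≠ 0 → γ = β ∨ prec γ β)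
    (g : Fin r → MvPowerSeries (Fin n) K) (hg : ∀ j, g j ≠ 0)
    (e : Fin r → (Fin n →₀ ℕ))
    (he : ∀ j, MvPowerSeries.coeff (R := K) (e j) (g j) ≠ 0 ∧
      ∀ γ, MvPowerSeries.coeff (R := K) γ (g j) ≠ 0 → γ = e j ∨ prec γ (e j))
    (f R R' : MvPowerSeries (Fin n) K) (q q' : Fin r → MvPowerSeries (Fin n) K)
    (hdiv : f = ∑ j, q j * g j + R)
    (hdiv' : f = ∑ j, q' j * g j + R')
    (hq : ∀ j, ∀ β, MvPowerSeries.coeff (R := K) β (q j) ≠ 0 → (β + e j) ∈ DeltaJ e j)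
    (hq' : ∀ j, ∀ β, MvPowerSeries.coeff (R := K) β (q' j) ≠ 0 → (β + e j) ∈ DeltaJ e j)
    (hR : ∀ β, MvPowerSeries.coeff (R := K) β R ≠ 0 → β ∈ DeltaBar e)
    (hR' : ∀ β, MvPowerSeries.coeff (R := K) β R' ≠ 0 → β ∈ DeltaBar e) :
    q = q' ∧ R = R' :=
  division_uniqueness_general prec htotal hirr htrans hadd hmax g e he f R R' q q' hdiv hdiv' hq hq'
    hR hR'
end
end
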